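/- arXiv:2306.07755 — 9 statements merged into one kernel-verified Lean document; each statement's English description precedes it below -/
import Mathlib

section
/- Let P be an m×m matrix with a PSD factorization by r×r complex positive semidefinite matrices {C_x}_{x=1}^m and {D_y}_{y=1}^m (i.e. tr(C_x D_y) = P_{xy} for all x,y), and suppose S_C = ∑_{x=1}^m C_x and S_D = ∑_{y=1}^m D_y are invertible. Then P admits a canonical form of PSD factorization: there exist r×r complex positive semidefinite matrices {C'_x}_{x=1}^m and {D'_y}_{y=1}^m with tr(C'_x D'_y) = P_{xy} for all x,y, and ∑_{x=1}^m C'_x = ∑_{y=1}^m D'_y = Λ, where Λ is a diagonal positive semidefinite matrix whose diagonal entries are the eigenvalues of (S_C^{1/2} S_D S_C^{1/2})^{1/2}. -/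
/-!
Put `R = S_C^{1/2}` and diagonalize `E = (R S_D R)^{1/2} = U Λ U⋆`. For `T = U⋆ E^{1/2} R⁻¹` the
congruences `C ↦ T C T⋆` and `D ↦ T⁻⋆ D T⁻¹` preserve positivity and every trace `tr(C_x D_y)`,
and they send `S_C` to `U⋆ E U = Λ` and `S_D` to `U⋆ E^{-1/2} E² E^{-1/2} U = Λ`.
-/

open Matrix ComplexOrder
open scoped MatrixOrder Ring

theorem exists_dual_congruences_to_mul_self {A : Type*} [Semiring A] [StarRing A]
    {a b r s : A}
    (hr : IsSelfAdjoint r) (hs : IsSelfAdjoint s) (hr_unit : IsUnit r) (hs_unit : IsUnit s)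
    (hrr : r * r = a) (hss : s * s * (s * s) = r * b * r) :
    ∃ t u : A, star t * u = 1 ∧ t * a * star t = s * s ∧ u * b * star u = s * s := by
  refine ⟨s * r⁻¹ʳ, s⁻¹ʳ * r, ?_, ?_, ?_⟩
  · rw [star_mul, hr.ringInverse.star_eq, hs.star_eq]
    calc r⁻¹ʳ * s * (s⁻¹ʳ * r) = r⁻¹ʳ * (s * s⁻¹ʳ) * r := by noncomm_ring
      _ = 1 := by
        rw [Ring.mul_inverse_cancel s hs_unit, mul_one, Ring.inverse_mul_cancel r hr_unit]
  · rw [star_mul, hr.ringInverse.star_eq, hs.star_eq, ← hrr]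
    calc s * r⁻¹ʳ * (r * r) * (r⁻¹ʳ * s) = s * (r⁻¹ʳ * r) * (r * r⁻¹ʳ) * s := by noncomm_ring
      _ = s * s := by
        rw [Ring.inverse_mul_cancel r hr_unit, Ring.mul_inverse_cancel r hr_unit, mul_one, mul_one]
  · rw [star_mul, hs.ringInverse.star_eq, hr.star_eq]
    calc s⁻¹ʳ * r * b * (r * s⁻¹ʳ) = s⁻¹ʳ * (r * b * r) * s⁻¹ʳ := by noncomm_ring
      _ = (s⁻¹ʳ * s) * (s * s) * (s * s⁻¹ʳ) := by rw [← hss]; noncomm_ring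
      _ = s * s := by
        rw [Ring.inverse_mul_cancel s hs_unit, Ring.mul_inverse_cancel s hs_unit, one_mul, mul_one]

namespace Matrix

variable {n 𝕜 : Type*} [Fintype n] [DecidableEq n] [RCLike 𝕜]

theorem trace_congr_mul_congr_of_conjTranspose_mul_eq_one {A B X Y : Matrix n n 𝕜}
    (hAB : Aᴴ * B = 1) :
    (A * X * Aᴴ * (B * Y * Bᴴ)).trace = (X * Y).trace := by
  have hBA : Bᴴ * A = 1 := by rw [← conjTranspose_conjTranspose A, ← conjTranspose_mul, hAB,
    conjTranspose_one]
  calc (A * X * Aᴴ * (B * Y * Bᴴ)).trace = (A * (X * (Aᴴ * B) * Y * Bᴴ)).trace := by noncomm_ring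
    _ = (X * Y * (Bᴴ * A)).trace := by rw [hAB, mul_one, trace_mul_comm]; noncomm_ring
    _ = (X * Y).trace := by rw [hBA, mul_one]

theorem exists_dual_congruences_to_diagonal_eigenvalues {a b R E : Matrix n n 𝕜}
    (ha : IsUnit a) (hb : IsUnit b) (hR : R.PosSemidef) (hE : E.PosSemidef) (hRR : R * R = a)
    (hEE : E * E = R * b * R) :
    ∃ t u : Matrix n n 𝕜, tᴴ * u = 1 ∧
      t * a * tᴴ = diagonal (RCLike.ofReal ∘ hE.1.eigenvalues) ∧
      u * b * uᴴ = diagonal (RCLike.ofReal ∘ hE.1.eigenvalues) := by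
  have hR_unit : IsUnit R := isUnit_of_mul_isUnit_left (hRR ▸ ha)
  have hE_unit : IsUnit E :=
    isUnit_of_mul_isUnit_left (hEE ▸ (hR_unit.mul hb).mul hR_unit)
  obtain ⟨S, hS, hS_unit, hSS⟩ : ∃ S : Matrix n n 𝕜, IsSelfAdjoint S ∧ IsUnit S ∧ S * S = E :=
    ⟨CFC.sqrt E, (CFC.sqrt_nonneg E).isSelfAdjoint,
      (CFC.isUnit_sqrt_iff E hE.nonneg).mpr hE_unit, CFC.sqrt_mul_sqrt_self E hE.nonneg⟩
  obtain ⟨t, u, htu, ht, hu⟩ :=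
    exists_dual_congruences_to_mul_self hR.1 hS hR_unit hS_unit hRR (by rw [hSS, hEE])
  set U : Matrix n n 𝕜 := (hE.1.eigenvectorUnitary : Matrix n n 𝕜)
  have hU : U * star U = 1 := Unitary.mul_star_self_of_mem hE.1.eigenvectorUnitary.2
  have hUEU : star U * E * U = diagonal (RCLike.ofReal ∘ hE.1.eigenvalues) :=
    (Unitary.conjStarAlgAut_star_apply _ _).symm.trans
      hE.1.conjStarAlgAut_star_eigenvectorUnitary
  refine ⟨star U * t, star U * u, ?_, ?_, ?_⟩
  all_goals simp only [← star_eq_conjTranspose, star_mul, star_star]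
  · calc star t * U * (star U * u) = star t * (U * star U) * u := by noncomm_ring
      _ = 1 := by rw [hU, mul_one, htu]
  · rw [← hUEU, ← hSS, ← ht]
    noncomm_ring
  · rw [← hUEU, ← hSS, ← hu]
    noncomm_ring

end Matrix

/-- every PSD factorization of `P` with invertible marginal sums `S_C`, `S_D`
corresponds to a canonical form of PSD factorization whose diagonal matrix `Λ` has as diagonal
entries the eigenvalues of `(S_C^{1/2} S_D S_C^{1/2})^{1/2}` (characterized below via the
unique PSD square roots `R` of `S_C` and `E` of `R * S_D * R`). -/
theorem stmt0 {m r : ℕ} (P : Matrix (Fin m) (Fin m) ℝ)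
    (C D : Fin m → Matrix (Fin r) (Fin r) ℂ)
    (hC : ∀ x, (C x).PosSemidef) (hD : ∀ y, (D y).PosSemidef)
    (hfac : ∀ x y, (C x * D y).trace = (P x y : ℂ))
    (hSC : IsUnit (∑ x, C x)) (hSD : IsUnit (∑ y, D y)) :
    ∃ (C' D' : Fin m → Matrix (Fin r) (Fin r) ℂ) (Λ : Matrix (Fin r) (Fin r) ℂ),
      (∀ x, (C' x).PosSemidef) ∧ (∀ y, (D' y).PosSemidef) ∧
      (∀ x y, (C' x * D' y).trace = (P x y : ℂ)) ∧
      (∑ x, C' x) = Λ ∧ (∑ y, D' y) = Λ ∧ Λ.IsDiag ∧ Λ.PosSemidef ∧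
      ∀ (R E : Matrix (Fin r) (Fin r) ℂ) (_ : R.PosSemidef) (hE : E.PosSemidef),
        R * R = (∑ x, C x) → E * E = R * (∑ y, D y) * R →
        (Finset.univ.val.map fun i => Λ i i) =
          Finset.univ.val.map fun i => ((hE.1.eigenvalues i : ℝ) : ℂ) := by
  set SC := ∑ x, C x
  set SD := ∑ y, D y
  have hSC_psd : SC.PosSemidef := posSemidef_sum _ fun x _ => hC x
  have hSD_psd : SD.PosSemidef := posSemidef_sum _ fun y _ => hD y
  set R := CFC.sqrt SC
  have hR : R.PosSemidef := (CFC.sqrt_nonneg SC).posSemidef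
  have hRR : R * R = SC := CFC.sqrt_mul_sqrt_self SC hSC_psd.nonneg
  have hM : (R * SD * R).PosSemidef := by
    simpa only [hR.1.eq] using hSD_psd.mul_mul_conjTranspose_same R
  set E := CFC.sqrt (R * SD * R)
  have hE : E.PosSemidef := (CFC.sqrt_nonneg _).posSemidef
  have hEE : E * E = R * SD * R := CFC.sqrt_mul_sqrt_self _ hM.nonneg
  obtain ⟨t, u, htu, ht, hu⟩ :=
    exists_dual_congruences_to_diagonal_eigenvalues hSC hSD hR hE hRR hEE
  refine ⟨fun x => t * C x * tᴴ, fun y => u * D y * uᴴ, _,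
    fun x => (hC x).mul_mul_conjTranspose_same t, fun y => (hD y).mul_mul_conjTranspose_same u,
    fun x y => (trace_congr_mul_congr_of_conjTranspose_mul_eq_one htu).trans (hfac x y),
    by rw [← ht, Finset.mul_sum, Finset.sum_mul], by rw [← hu, Finset.mul_sum, Finset.sum_mul],
    isDiag_diagonal _, ht ▸ hSC_psd.mul_mul_conjTranspose_same t, ?_⟩
  intro R' E' hR' hE' hRR' hEE'
  obtain rfl : R' = R := (CFC.sqrt_unique hRR' hR'.nonneg).symm
  obtain rfl : E' = E := (CFC.sqrt_unique hEE' hE'.nonneg).symm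
  simp only [diagonal_apply_eq, Function.comp_apply]
  rfl
end

section
/- Let d ≥ 2 and let C_1,…,C_d and D_1,…,D_d be d×d complex positive semidefinite matrices such that tr(C_x D_y) = c·δ_{xy} for all x,y ∈ [d], where c > 0. Then every C_x and every D_y has rank exactly 1. -/
open Matrix ComplexOrder

/-!
For positive semidefinite `A`, `B`, writing `A = aᴴ a` and `B = bᴴ b` gives
`tr (A B) = ‖a bᴴ‖²_F`, so `tr (C_x D_y) = 0` forces `C_x D_y = 0`; hence `C_x D_y = 0` exactly
when `x ≠ y`. Picking `v_y` with `C_y D_y v_y ≠ 0`, the `d - 1` vectors `D_y v_y` with `y ≠ x` are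
linearly independent (apply `C_z` to a vanishing combination) and lie in `ker C_x`, so
`rank C_x ≤ 1`, while `C_x ≠ 0`. Taking adjoints swaps the roles of `C` and `D`.
-/

theorem LinearIndependent.of_apply_eq_zero_iff_ne {ι K M N : Type*} [DivisionRing K]
    [AddCommGroup M] [Module K M] [AddCommGroup N] [Module K N]
    (f : ι → M →ₗ[K] N) (v : ι → M) (hfv : ∀ i j, f i (v j) = 0 ↔ i ≠ j) :
    LinearIndependent K v := by
  classical
  rw [linearIndependent_iff']
  intro s g hsum i hi
  have hfi : ∑ j ∈ s, g j • f i (v j) = g i • f i (v i) :=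
    Finset.sum_eq_single i (fun j _ hji => by rw [(hfv i j).2 hji.symm, smul_zero])
      (fun h => absurd hi h)
  have : g i • f i (v i) = 0 := by
    rw [← hfi, ← map_zero (f i), ← hsum, map_sum]
    simp only [map_smul]
  exact (smul_eq_zero.mp this).resolve_right ((hfv i i).not.2 (not_not.2 rfl))

namespace Matrix

open scoped MatrixOrder in
theorem PosSemidef.trace_mul_eq_zero_iff {n 𝕜 : Type*} [Fintype n] [RCLike 𝕜]
    {A B : Matrix n n 𝕜} (hA : A.PosSemidef) (hB : B.PosSemidef) :
    (A * B).trace = 0 ↔ A * B = 0 := by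
  classical
  refine ⟨fun h => ?_, fun h => by rw [h, trace_zero]⟩
  obtain ⟨a, rfl⟩ := CStarAlgebra.nonneg_iff_eq_star_mul_self.mp hA.nonneg
  obtain ⟨b, rfl⟩ := CStarAlgebra.nonneg_iff_eq_star_mul_self.mp hB.nonneg
  simp only [star_eq_conjTranspose] at h ⊢
  have hab : a * bᴴ = 0 := by
    rw [← trace_conjTranspose_mul_self_eq_zero_iff, ← h]
    simp only [conjTranspose_mul, conjTranspose_conjTranspose, Matrix.mul_assoc]
    rw [← trace_mul_comm]
    simp only [Matrix.mul_assoc]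
  rw [Matrix.mul_assoc, ← Matrix.mul_assoc a, hab, zero_mul, mul_zero]

variable {n K : Type*} [Fintype n] [Field K]

theorem rank_ne_zero_of_ne_zero [DecidableEq n] {A : Matrix n n K} (hA : A ≠ 0) : A.rank ≠ 0 := by
  rw [rank, Ne, Submodule.finrank_eq_zero, LinearMap.range_eq_bot, ← toLin'_apply',
    LinearEquiv.map_eq_zero_iff]
  exact hA

theorem rank_add_card_sub_one_le {ι : Type*} [Fintype ι] (C D : ι → Matrix n n K)
    (hCD : ∀ x y, C x * D y = 0 ↔ x ≠ y) (x : ι) :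
    (C x).rank + (Fintype.card ι - 1) ≤ Fintype.card n := by
  classical
  have hv : ∀ y, ∃ v, (C y * D y) *ᵥ v ≠ 0 := fun y => by
    by_contra! h
    exact (hCD y y).1 (ext_iff_mulVec.2 fun v => by rw [h, zero_mulVec]) rfl
  choose v hv using hv
  have hrk := LinearMap.finrank_range_add_finrank_ker (C x).mulVecLin
  set ker := LinearMap.ker (C x).mulVecLin
  let w : {y // y ≠ x} → ker := fun y =>
    ⟨D y *ᵥ v y, by simp [ker, mulVec_mulVec, (hCD x y).2 (Ne.symm y.2)]⟩
  have hw : LinearIndependent K w := by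
    refine .of_apply_eq_zero_iff_ne (fun z : {y // y ≠ x} => (C z).mulVecLin ∘ₗ ker.subtype) w
      fun z y => ?_
    simp only [LinearMap.coe_comp, Function.comp_apply, Submodule.coe_subtype, mulVecLin_apply,
      w, mulVec_mulVec]
    by_cases hzy : z = y
    · subst hzy; simpa using hv z
    · simp [(hCD z y).2 (Subtype.coe_ne_coe.2 hzy), hzy]
  have hcard := hw.fintype_card_le_finrank
  simp only [Fintype.card_subtype_compl, Fintype.card_subtype_eq,
    Module.finrank_fintype_fun_eq_card] at hcard hrk
  rw [rank]
  omega

theorem rank_eq_one_of_mul_eq_zero_iff_ne [DecidableEq n] (C D : n → Matrix n n K)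
    (hCD : ∀ x y, C x * D y = 0 ↔ x ≠ y) (x : n) : (C x).rank = 1 := by
  have hle := rank_add_card_sub_one_le C D hCD x
  have hCx : C x ≠ 0 := fun h => (hCD x x).1 (by rw [h, zero_mul]) rfl
  have hne := rank_ne_zero_of_ne_zero hCx
  omega

end Matrix

theorem stmt1_general {d : ℕ} (c : ℝ) (hc : 0 < c)
    (C D : Fin d → Matrix (Fin d) (Fin d) ℂ)
    (hC : ∀ x, (C x).PosSemidef) (hD : ∀ y, (D y).PosSemidef)
    (hfac : ∀ x y, (C x * D y).trace = if x = y then (c : ℂ) else 0) :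
    (∀ x, (C x).rank = 1) ∧ (∀ y, (D y).rank = 1) := by
  have hCD : ∀ x y, C x * D y = 0 ↔ x ≠ y := fun x y => by
    rw [← (hC x).trace_mul_eq_zero_iff (hD y), hfac]
    simp [hc.ne']
  have hDC : ∀ x y, D x * C y = 0 ↔ x ≠ y := fun x y => by
    rw [← conjTranspose_eq_zero, conjTranspose_mul, (hD x).isHermitian.eq, (hC y).isHermitian.eq,
      hCD, ne_comm]
  exact ⟨rank_eq_one_of_mul_eq_zero_iff_ne C D hCD, rank_eq_one_of_mul_eq_zero_iff_ne D C hDC⟩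

/-- if `d` PSD matrices `C_x` and `d` PSD matrices `D_y` of size `d × d` satisfy
`tr(C_x D_y) = c·δ_{xy}` with `c > 0`, then every `C_x` and every `D_y` has rank exactly 1. -/
theorem stmt1 {d : ℕ} (hd : 2 ≤ d) (c : ℝ) (hc : 0 < c)
    (C D : Fin d → Matrix (Fin d) (Fin d) ℂ)
    (hC : ∀ x, (C x).PosSemidef) (hD : ∀ y, (D y).PosSemidef)
    (hfac : ∀ x y, (C x * D y).trace = if x = y then (c : ℂ) else 0) :
    (∀ x, (C x).rank = 1) ∧ (∀ y, (D y).rank = 1) :=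
  stmt1_general c hc C D hC hD hfac
end

section
/- Fix d ≥ 2 and let ω = e^{2πi/d}. For x ∈ [d] let |γ_x⟩ ∈ ℂ^d be the unit vector with j-th entry (1/√d)·ω^{(x-1)j} (j = 0,…,d−1), and define the d×d positive semidefinite matrices C_x = D_x = (√d/(d+1))·|γ_x⟩⟨γ_x| for x ∈ [d], and C_{d+x} = D_{d+x} = (1/(√d(d+1)))·|x−1⟩⟨x−1| for x ∈ [d], where |i⟩ denotes the i-th computational basis vector. Then tr(C_x D_y) = P_{xy} for all x,y ∈ [2d], and ∑_{x=1}^{2d} C_x = ∑_{y=1}^{2d} D_y = (1/√d)·I_d; in particular {C_x},{D_y} is a canonical form of PSD factorization of P. -/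
open Matrix ComplexOrder

/-- The correlation `P` that semi-self-tests the maximally entangled state, as a `2d × 2d`
matrix indexed by `Fin d ⊕ Fin d` (with `Sum.inl x` the outcome `x ∈ [d]` and `Sum.inr x`
the outcome `d + x`), given in block form by
`P = (1/(d(d+1)²)) · [[d²·I_d, J_d], [J_d, I_d]]`. -/
noncomputable def Pmat (d : ℕ) : Matrix (Fin d ⊕ Fin d) (Fin d ⊕ Fin d) ℝ :=
  fun x y =>
    (1 / (d * (d + 1) ^ 2)) *
      match x, y with
      | Sum.inl i, Sum.inl j => if i = j then (d : ℝ) ^ 2 else 0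
      | Sum.inl _, Sum.inr _ => 1
      | Sum.inr _, Sum.inl _ => 1
      | Sum.inr i, Sum.inr j => if i = j then 1 else 0

/-- The Fourier vector `|γ_x⟩` with `j`-th entry `(1/√d)·e^{2πi·x·j/d}` (here `x : Fin d`
corresponds to `x - 1 ∈ {0, …, d-1}` for `x ∈ [d]`). -/
noncomputable def gammaVec (d : ℕ) (x : Fin d) : Fin d → ℂ :=
  fun j => (1 / Real.sqrt d : ℝ) *
    Complex.exp (2 * Real.pi * Complex.I * (x : ℕ) * (j : ℕ) / d)

/-- The explicit factorization: `C_x = (√d/(d+1))·|γ_x⟩⟨γ_x|` for `x ∈ [d]` and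
`C_{d+x} = (1/(√d(d+1)))·|x-1⟩⟨x-1|` for `x ∈ [d]`. -/
noncomputable def Cexp (d : ℕ) : Fin d ⊕ Fin d → Matrix (Fin d) (Fin d) ℂ
  | Sum.inl x => (Real.sqrt d / (d + 1) : ℝ) •
      Matrix.vecMulVec (gammaVec d x) (star (gammaVec d x))
  | Sum.inr x => (1 / (Real.sqrt d * (d + 1)) : ℝ) • Matrix.single x x 1

/-
The vectors `|γ_x⟩` are the columns of the discrete Fourier matrix. They are orthonormal because a
geometric sum of a nontrivial `d`-th root of unity over a full period vanishes; as the matrix is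
square, this makes it unitary, which gives the completeness relation `∑ₓ |γ_x⟩⟨γ_x| = I`.
Every trace `tr(C_x C_y)` is then a prefactor times `|⟨γ_x|γ_y⟩|² = δ_xy`, `|⟨j|γ_x⟩|² = 1/d` or
`|⟨i|j⟩|² = δ_ij`, and `∑ C_x = (√d/(d+1) + 1/(√d(d+1))) • I = (1/√d) • I`.
-/

open Finset

theorem IsPrimitiveRoot.geom_sum_zpow {K : Type*} [Field K] {ζ : K} {n : ℕ}
    (h : IsPrimitiveRoot ζ n) (k : ℤ) :
    ∑ j ∈ range n, (ζ ^ k) ^ j = if (n : ℤ) ∣ k then (n : K) else 0 := by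
  split_ifs with hk
  · simp [(h.zpow_eq_one_iff_dvd k).2 hk]
  · have hne : ζ ^ k ≠ 1 := mt (h.zpow_eq_one_iff_dvd k).1 hk
    rw [geom_sum_eq hne, ← zpow_natCast, ← _root_.zpow_mul, mul_comm, _root_.zpow_mul,
      zpow_natCast, h.pow_eq_one, _root_.one_zpow, sub_self, zero_div]

theorem Fin.intCast_dvd_sub_iff {n : ℕ} (x y : Fin n) : (n : ℤ) ∣ (y : ℤ) - x ↔ x = y := by
  rw [← Int.modEq_iff_dvd, Int.natCast_modEq_iff]
  exact ⟨fun h => Fin.ext (h.eq_of_lt_of_lt x.isLt y.isLt), fun h => h ▸ rfl⟩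

theorem Complex.ofReal_one_div_sqrt_natCast_sq (d : ℕ) :
    ((1 / Real.sqrt d : ℝ) : ℂ) ^ 2 = 1 / d := by
  rw [← Complex.ofReal_pow, div_pow, Real.sq_sqrt (Nat.cast_nonneg d)]
  push_cast
  ring

namespace Matrix

theorem posSemidef_single_self {n R : Type*} [Fintype n] [DecidableEq n] [CommRing R]
    [PartialOrder R] [StarRing R] [StarOrderedRing R] (i : n) :
    (single i i (1 : R)).PosSemidef := by
  rw [← diagonal_single]
  exact posSemidef_diagonal_iff.2 fun j => by by_cases h : j = i <;> simp [h]

theorem trace_vecMulVec_star_mul_vecMulVec_star {n R : Type*} [Fintype n] [CommRing R]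
    [StarRing R] (u v : n → R) :
    (vecMulVec u (star u) * vecMulVec v (star v)).trace = (star u ⬝ᵥ v) * (star v ⬝ᵥ u) := by
  rw [vecMulVec_mul_vecMulVec, trace_vecMulVec, dotProduct_smul, smul_eq_mul,
    dotProduct_comm u]

end Matrix

noncomputable def fourierMatrix (d : ℕ) : Matrix (Fin d) (Fin d) ℂ := of fun j x => gammaVec d x j

section Fourier

variable {d : ℕ}

local notation "ζ" => Complex.exp (2 * Real.pi * Complex.I / d)

theorem gammaVec_eq_pow (x j : Fin d) :
    gammaVec d x j = ((1 / Real.sqrt d : ℝ) : ℂ) * ζ ^ ((x : ℕ) * (j : ℕ)) := by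
  rw [gammaVec, ← Complex.exp_nat_mul]
  push_cast
  ring_nf

variable [NeZero d]

theorem gammaVec_mul_star_self (x j : Fin d) :
    gammaVec d x j * star (gammaVec d x j) = 1 / d := by
  have hζ := Complex.isPrimitiveRoot_exp d (NeZero.ne d)
  rw [Complex.star_def, Complex.mul_conj', gammaVec_eq_pow, norm_mul, norm_pow,
    hζ.norm'_eq_one (NeZero.ne d), one_pow, mul_one, Complex.norm_real, Real.norm_eq_abs,
    abs_of_nonneg (by positivity), Complex.ofReal_one_div_sqrt_natCast_sq]

theorem star_gammaVec_dotProduct_gammaVec (x y : Fin d) :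
    star (gammaVec d x) ⬝ᵥ gammaVec d y = if x = y then 1 else 0 := by
  have hζ := Complex.isPrimitiveRoot_exp d (NeZero.ne d)
  have hconj : star ζ = ζ⁻¹ := (Complex.inv_eq_conj (hζ.norm'_eq_one (NeZero.ne d))).symm
  have hterm (j : Fin d) :
      star (gammaVec d x j) * gammaVec d y j = 1 / d * (ζ ^ ((y : ℤ) - x)) ^ (j : ℕ) := by
    rw [gammaVec_eq_pow, gammaVec_eq_pow, star_mul', star_pow, hconj, Complex.star_def,
      Complex.conj_ofReal, mul_mul_mul_comm, ← sq, Complex.ofReal_one_div_sqrt_natCast_sq,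
      ← zpow_natCast (ζ ^ _), ← _root_.zpow_mul, sub_mul, zpow_sub₀ (hζ.ne_zero (NeZero.ne d))]
    simp only [← Nat.cast_mul, zpow_natCast]
    ring
  simp only [dotProduct, Pi.star_apply, hterm, ← mul_sum]
  rw [Fin.sum_univ_eq_sum_range (fun j => (ζ ^ ((y : ℤ) - x)) ^ j), hζ.geom_sum_zpow]
  simp only [Fin.intCast_dvd_sub_iff]
  split_ifs <;> simp

theorem fourierMatrix_mem_unitaryGroup : fourierMatrix d ∈ unitaryGroup (Fin d) ℂ := by
  rw [mem_unitaryGroup_iff']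
  ext x y
  simpa [fourierMatrix, mul_apply, dotProduct, one_apply] using
    star_gammaVec_dotProduct_gammaVec x y

theorem sum_vecMulVec_gammaVec : ∑ x, vecMulVec (gammaVec d x) (star (gammaVec d x)) = 1 := by
  rw [← mem_unitaryGroup_iff.1 fourierMatrix_mem_unitaryGroup]
  ext i j
  simp [fourierMatrix, mul_apply, Matrix.sum_apply, vecMulVec_apply]

end Fourier

theorem posSemidef_Cexp (d : ℕ) (x : Fin d ⊕ Fin d) : (Cexp d x).PosSemidef := by
  cases x with
  | inl x => exact (posSemidef_vecMulVec_self_star _).smul (by positivity)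
  | inr x => exact (posSemidef_single_self x).smul (by positivity)

theorem trace_Cexp_mul_Cexp (d : ℕ) [NeZero d] (x y : Fin d ⊕ Fin d) :
    (Cexp d x * Cexp d y).trace = (Pmat d x y : ℂ) := by
  have hs : ((Real.sqrt d : ℝ) : ℂ) ^ 2 = d := by
    rw [← Complex.ofReal_pow, Real.sq_sqrt (Nat.cast_nonneg _), Complex.ofReal_natCast]
  have hs0 : ((Real.sqrt d : ℝ) : ℂ) ≠ 0 := by
    simpa using Real.sqrt_ne_zero'.2 (Nat.cast_pos.2 (Nat.pos_of_neZero d))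
  have hd0 : (d : ℂ) ≠ 0 := Nat.cast_ne_zero.2 (NeZero.ne d)
  rcases x with x | x <;> rcases y with y | y <;>
    simp only [Cexp, Pmat, smul_mul_smul_comm, trace_smul, Complex.real_smul]
  · rw [trace_vecMulVec_star_mul_vecMulVec_star, star_gammaVec_dotProduct_gammaVec,
      star_gammaVec_dotProduct_gammaVec]
    obtain rfl | hxy := eq_or_ne x y
    · rw [if_pos rfl, if_pos rfl]
      push_cast
      field_simp
      rw [hs]
    · simp [hxy, hxy.symm]
  · rw [trace_mul_single, MulOpposite.op_one, one_smul, vecMulVec_apply, Pi.star_apply,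
      gammaVec_mul_star_self]
    push_cast
    field_simp
  · rw [trace_single_mul, one_smul, vecMulVec_apply, Pi.star_apply, gammaVec_mul_star_self]
    push_cast
    field_simp
  · obtain rfl | hxy := eq_or_ne x y
    · rw [single_mul_single_same, one_mul, trace_single_eq_same, if_pos rfl]
      push_cast
      field_simp
      rw [hs]
    · simp [hxy]

theorem sum_Cexp (d : ℕ) [NeZero d] :
    ∑ x, Cexp d x = (1 / Real.sqrt d : ℝ) • (1 : Matrix (Fin d) (Fin d) ℂ) := by
  have hcoeff : Real.sqrt d / (d + 1) + 1 / (Real.sqrt d * (d + 1)) = 1 / Real.sqrt d := by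
    have hs : Real.sqrt d ^ 2 = d := Real.sq_sqrt (Nat.cast_nonneg _)
    have hs0 : Real.sqrt d ≠ 0 := Real.sqrt_ne_zero'.2 (Nat.cast_pos.2 (Nat.pos_of_neZero d))
    field_simp
    rw [hs]
  simp only [Fintype.sum_sum_type, Cexp, ← smul_sum, sum_vecMulVec_gammaVec, sum_single_one,
    ← add_smul, hcoeff]

theorem stmt2_general (d : ℕ) :
    (∀ x, (Cexp d x).PosSemidef) ∧
    (∀ x y, (Cexp d x * Cexp d y).trace = (Pmat d x y : ℂ)) ∧
    (∑ x, Cexp d x) = (1 / Real.sqrt d : ℝ) • (1 : Matrix (Fin d) (Fin d) ℂ) := by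
  obtain rfl | _ := eq_zero_or_neZero d
  · exact ⟨isEmptyElim, isEmptyElim, Subsingleton.elim _ _⟩
  exact ⟨posSemidef_Cexp d, trace_Cexp_mul_Cexp d, sum_Cexp d⟩

/-- the explicit matrices `C_x = D_x = Cexp d x` form a canonical form of PSD
factorization of `P`: they are PSD, `tr(C_x D_y) = P_{xy}` for all `x, y ∈ [2d]`, and
`∑_x C_x = ∑_y D_y = (1/√d)·I_d`. -/
theorem stmt2 (d : ℕ) (hd : 2 ≤ d) :
    (∀ x, (Cexp d x).PosSemidef) ∧
    (∀ x y, (Cexp d x * Cexp d y).trace = (Pmat d x y : ℂ)) ∧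
    (∑ x, Cexp d x) = (1 / Real.sqrt d : ℝ) • (1 : Matrix (Fin d) (Fin d) ℂ) :=
  stmt2_general d
end

section
/- Let d ≥ 2. Suppose ρ is a d×d bipartite quantum state and {A_x}_{x=1}^{2d}, {B_y}_{y=1}^{2d} are POVMs with 2d outcomes on each side such that tr(ρ·(A_x ⊗ B_y)) = P_{xy} for all x,y ∈ [2d]. Then both reduced states of ρ are maximally mixed: for all i,j ∈ Fin d, ∑_{k} ρ_{(i,k),(j,k)} = δ_{ij}/d and ∑_{k} ρ_{(k,i),(k,j)} = δ_{ij}/d. -/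
open Matrix Kronecker ComplexOrder

/-!
Let `σₓ = Tr_A[ρ (Aₓ ⊗ 1)]`, so that `tr (σₓ B_y) = P x y` and `∑ₓ σₓ = ρ_B`. For positive
matrices a vanishing trace pairing means a vanishing product, so within each diagonal block of
`P` we get `σᵢ Bⱼ = 0` for `i ≠ j`. In dimension `d` this forces each `σᵢ` to have rank one, and
then `(∑ᵢ σᵢ) (∑ⱼ Bⱼ) = P i i • 1` on each block. With `R` the sum of Bob's first-block effects,
the two block sums of the `σ`'s are therefore multiples of `R⁻¹` and `(1 - R)⁻¹`, and the total
mass `1` of `P` says that `tr (d² R⁻¹ + (1 - R)⁻¹) = d (d + 1)²`. The operator inequality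
`d² R⁻¹ + (1 - R)⁻¹ ≥ (d + 1)²` then holds with equal traces, hence with equality, which pins
down `ρ_B = 1 / d`. Alice's marginal follows in the same way because `P` is symmetric.
-/

namespace Matrix

section Kronecker

variable {R m n : Type*} [Fintype m]

def partialTrace₁ [AddCommMonoid R] (M : Matrix (m × n) (m × n) R) : Matrix n n R :=
  ∑ a, M.submatrix (Prod.mk a) (Prod.mk a)

@[simp]
theorem partialTrace₁_apply [AddCommMonoid R] (M : Matrix (m × n) (m × n) R) (k l : n) :
    partialTrace₁ M k l = ∑ a, M (a, k) (a, l) := by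
  simp [partialTrace₁, sum_apply]

variable [Fintype n]

theorem trace_partialTrace₁ [AddCommMonoid R] (M : Matrix (m × n) (m × n) R) :
    (partialTrace₁ M).trace = M.trace := by
  simp only [trace, diag, partialTrace₁_apply, Fintype.sum_prod_type]
  exact Finset.sum_comm

variable [CommSemiring R]

theorem partialTrace₁_mul [DecidableEq m] (M : Matrix (m × n) (m × n) R) (B : Matrix n n R) :
    partialTrace₁ M * B = partialTrace₁ (M * (1 ⊗ₖ B)) := by
  ext k l
  simpa [mul_apply, Fintype.sum_prod_type, one_apply, Finset.sum_mul] using Finset.sum_comm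

theorem partialTrace₁_kronecker_one_mul [DecidableEq n] (X : Matrix m m R)
    (M : Matrix (m × n) (m × n) R) :
    partialTrace₁ ((X ⊗ₖ 1) * M) = partialTrace₁ (M * (X ⊗ₖ 1)) := by
  ext k l
  simpa [mul_apply, Fintype.sum_prod_type, one_apply, mul_comm (X _ _)] using Finset.sum_comm

theorem trace_submatrix_swap_mul_kronecker (ρ : Matrix (m × n) (m × n) R) (A : Matrix m m R)
    (B : Matrix n n R) :
    (ρ.submatrix Prod.swap Prod.swap * (B ⊗ₖ A)).trace = (ρ * (A ⊗ₖ B)).trace := by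
  simp only [trace, diag, mul_apply, submatrix_apply, kronecker_apply, Fintype.sum_prod_type,
    Prod.swap_prod_mk]
  rw [Finset.sum_comm]
  refine Finset.sum_congr rfl fun a _ => Finset.sum_congr rfl fun k _ => ?_
  rw [Finset.sum_comm]
  simp_rw [mul_comm (B _ _)]

end Kronecker

section LinearAlgebra

variable {K n : Type*} [Fintype n]

theorem mulVec_eq_trace_smul_of_mulVec_mem_span_singleton [DecidableEq n] [CommSemiring K]
    {T : Matrix n n K} {u : n → K} (hT : ∀ w, T *ᵥ w ∈ K ∙ u) : T *ᵥ u = T.trace • u := by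
  choose c hc using fun l => Submodule.mem_span_singleton.mp (hT (Pi.single l 1))
  have hTc : T = vecMulVec u c := by
    ext i l
    simpa [mulVec_single_one, vecMulVec_apply, mul_comm] using (congrFun (hc l) i).symm
  rw [hTc, vecMulVec_mulVec, trace_vecMulVec, dotProduct_comm, op_smul_eq_smul]

variable [Field K] {m : Type*}

theorem linearIndependent_of_mulVec_eq_zero_of_ne {ι : Type*} {B : ι → Matrix m n K}
    {u : ι → n → K} (hoff : ∀ i j, i ≠ j → B i *ᵥ u j = 0) (hdiag : ∀ i, B i *ᵥ u i ≠ 0) :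
    LinearIndependent K u := by
  classical
  rw [linearIndependent_iff']
  intro s g hg i hi
  have h := congrArg (B i *ᵥ ·) hg
  simp only [mulVec_sum, mulVec_smul, mulVec_zero] at h
  rw [Finset.sum_eq_single_of_mem i hi fun j _ hji => by rw [hoff i j hji.symm, smul_zero]] at h
  exact (smul_eq_zero.mp h).resolve_right (hdiag i)

variable {B : n → Matrix m n K} {u : n → n → K}

theorem span_range_eq_top_of_mulVec_eq_zero_of_ne (hoff : ∀ i j, i ≠ j → B i *ᵥ u j = 0)
    (hdiag : ∀ i, B i *ᵥ u i ≠ 0) : Submodule.span K (Set.range u) = ⊤ :=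
  (linearIndependent_of_mulVec_eq_zero_of_ne hoff hdiag).span_eq_top_of_card_eq_finrank'
    (Module.finrank_fintype_fun_eq_card K).symm

theorem mem_span_singleton_of_mulVec_eq_zero_of_ne (hoff : ∀ i j, i ≠ j → B i *ᵥ u j = 0)
    (hdiag : ∀ i, B i *ᵥ u i ≠ 0) {k : n} {w : n → K} (hw : ∀ j, j ≠ k → B j *ᵥ w = 0) :
    w ∈ K ∙ u k := by
  have hw_mem : w ∈ Submodule.span K (Set.range u) :=
    span_range_eq_top_of_mulVec_eq_zero_of_ne hoff hdiag ▸ Submodule.mem_top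
  obtain ⟨c, rfl⟩ := (Submodule.mem_span_range_iff_exists_fun K).mp hw_mem
  have hc : ∀ j, j ≠ k → c j = 0 := fun j hjk => by
    have h := hw j hjk
    simp only [mulVec_sum, mulVec_smul] at h
    rw [Finset.sum_eq_single j (fun i _ hij => by rw [hoff j i hij.symm, smul_zero]) (by simp)]
      at h
    exact (smul_eq_zero.mp h).resolve_right (hdiag j)
  rw [Finset.sum_eq_single k (fun j _ hjk => by rw [hc j hjk, zero_smul]) (by simp)]
  exact Submodule.smul_mem _ _ (Submodule.mem_span_singleton_self _)

end LinearAlgebra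

section PosSemidef

variable {𝕜 m n : Type*} [RCLike 𝕜] [Fintype m]

theorem PosSemidef.partialTrace₁ {M : Matrix (m × n) (m × n) 𝕜} (hM : M.PosSemidef) :
    M.partialTrace₁.PosSemidef :=
  posSemidef_sum _ fun a _ => hM.submatrix (Prod.mk a)

variable [Fintype n]

open scoped MatrixOrder in
theorem PosSemidef.mul_eq_zero_of_trace_mul_eq_zero {A B : Matrix n n 𝕜} (hA : A.PosSemidef)
    (hB : B.PosSemidef) (h : (A * B).trace = 0) : A * B = 0 := by
  classical
  obtain ⟨X, rfl⟩ := CStarAlgebra.nonneg_iff_eq_star_mul_self.mp hA.nonneg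
  obtain ⟨Y, rfl⟩ := CStarAlgebra.nonneg_iff_eq_star_mul_self.mp hB.nonneg
  have hXY : X * Yᴴ = 0 := by
    rw [← trace_mul_conjTranspose_self_eq_zero_iff, conjTranspose_mul,
      conjTranspose_conjTranspose, ← Matrix.mul_assoc, trace_mul_cycle, ← h]
    simp only [star_eq_conjTranspose, Matrix.mul_assoc]
  simp only [star_eq_conjTranspose]
  rw [Matrix.mul_assoc, ← Matrix.mul_assoc X, hXY, Matrix.zero_mul, Matrix.mul_zero]

variable [DecidableEq n]

theorem trace_partialTrace₁_mul_kronecker_one_mul [DecidableEq m]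
    (ρ : Matrix (m × n) (m × n) 𝕜) (A : Matrix m m 𝕜) (B : Matrix n n 𝕜) :
    ((ρ * (A ⊗ₖ 1)).partialTrace₁ * B).trace = (ρ * (A ⊗ₖ B)).trace := by
  rw [partialTrace₁_mul, trace_partialTrace₁, Matrix.mul_assoc, ← mul_kronecker_mul,
    Matrix.mul_one, Matrix.one_mul]

open scoped MatrixOrder in
theorem PosSemidef.partialTrace₁_mul_kronecker_one [DecidableEq m]
    {ρ : Matrix (m × n) (m × n) 𝕜} {A : Matrix m m 𝕜} (hρ : ρ.PosSemidef) (hA : A.PosSemidef) :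
    (ρ * (A ⊗ₖ 1)).partialTrace₁.PosSemidef := by
  obtain ⟨C, rfl⟩ := CStarAlgebra.nonneg_iff_eq_star_mul_self.mp hA.nonneg
  have hC : (star C * C) ⊗ₖ (1 : Matrix n n 𝕜) = (C ⊗ₖ 1)ᴴ * (C ⊗ₖ 1) := by
    rw [conjTranspose_kronecker, conjTranspose_one, ← mul_kronecker_mul, Matrix.one_mul,
      star_eq_conjTranspose]
  rw [hC, ← Matrix.mul_assoc, ← partialTrace₁_kronecker_one_mul, ← Matrix.mul_assoc]
  exact (hρ.mul_mul_conjTranspose_same _).partialTrace₁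

theorem sum_partialTrace₁_mul_kronecker_one [DecidableEq m] {ι : Type*} [Fintype ι]
    (ρ : Matrix (m × n) (m × n) 𝕜) {A : ι → Matrix m m 𝕜} (hA : ∑ x, A x = 1) :
    ∑ x, (ρ * (A x ⊗ₖ 1)).partialTrace₁ = ρ.partialTrace₁ := by
  ext k l
  simp only [sum_apply, partialTrace₁_apply, mul_apply, Fintype.sum_prod_type, kronecker_apply,
    one_apply, mul_ite, mul_one, mul_zero, Finset.sum_ite_eq', Finset.mem_univ, if_true]
  rw [Finset.sum_comm]
  refine Finset.sum_congr rfl fun a _ => ?_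
  rw [Finset.sum_comm]
  simp_rw [← Finset.mul_sum, ← sum_apply, hA, one_apply, mul_ite, mul_one, mul_zero]
  simp

/- The vectors `u i = N i p i` with `B i (u i) ≠ 0` form a basis; `N k` maps into the line
through `u k`, on which `N k * B k` therefore acts as its trace `v`. -/
theorem sum_mul_sum_eq_smul_one_of_trace_mul_eq_ite {B N : n → Matrix n n 𝕜}
    (hB : ∀ i, (B i).PosSemidef) (hN : ∀ i, (N i).PosSemidef) {v : 𝕜} (hv : v ≠ 0)
    (htr : ∀ i j, (N i * B j).trace = if i = j then v else 0) :
    (∑ i, N i) * (∑ j, B j) = v • 1 := by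
  have hNB : ∀ i j, i ≠ j → N i * B j = 0 := fun i j hij =>
    (hN i).mul_eq_zero_of_trace_mul_eq_zero (hB j) (by rw [htr, if_neg hij])
  have hBN : ∀ i j, i ≠ j → B j * N i = 0 := fun i j hij =>
    (hB j).mul_eq_zero_of_trace_mul_eq_zero (hN i) (by rw [trace_mul_comm, htr, if_neg hij])
  have hp : ∀ i, ∃ p, B i *ᵥ (N i *ᵥ p) ≠ 0 := fun i => by
    have hBNi : B i * N i ≠ 0 := fun h0 => by
      have h := htr i i
      rw [if_pos rfl, trace_mul_comm, h0, trace_zero] at h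
      exact hv h.symm
    simpa [ext_iff_mulVec, mulVec_mulVec] using hBNi
  choose p hp using hp
  set u := fun i => N i *ᵥ p i
  have hoff : ∀ i j, i ≠ j → B i *ᵥ u j = 0 := fun i j hij => by
    simp only [u, mulVec_mulVec, hBN j i hij.symm, zero_mulVec]
  have heig : ∀ k, (N k * B k) *ᵥ u k = v • u k := fun k => by
    rw [mulVec_eq_trace_smul_of_mulVec_mem_span_singleton, htr, if_pos rfl]
    refine fun w => mem_span_singleton_of_mulVec_eq_zero_of_ne hoff hp fun j hjk => ?_
    rw [mulVec_mulVec, ← Matrix.mul_assoc, hBN k j hjk.symm, Matrix.zero_mul, zero_mulVec]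
  have hu : ∀ k, ((∑ i, N i) * (∑ j, B j)) *ᵥ u k = (v • 1 : Matrix n n 𝕜) *ᵥ u k := by
    intro k
    rw [← mulVec_mulVec, sum_mulVec _ B, Finset.sum_eq_single k (fun j _ hjk => hoff j k hjk)
      (by simp), sum_mulVec, Finset.sum_eq_single k (fun i _ hik => by
        rw [mulVec_mulVec, hNB i k hik, zero_mulVec]) (by simp), mulVec_mulVec, heig,
      smul_mulVec, one_mulVec]
  exact toLin'.injective <| LinearMap.ext_on_range
    (span_range_eq_top_of_mulVec_eq_zero_of_ne hoff hp) fun k => by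
      simpa only [toLin'_apply] using hu k

variable {R W W' : Matrix n n 𝕜}

theorem smul_sub_smul_one_mul_mul_smul_sub_smul_one (hWR : W * R = 1) (α β : ℝ) :
    (α • R - β • 1) * W * (α • R - β • 1) = α ^ 2 • R - (2 * α * β) • 1 + β ^ 2 • W := by
  have hRW : R * W = 1 := mul_eq_one_comm.mp hWR
  simp only [sub_mul, mul_sub, smul_mul_assoc, mul_smul_comm, Matrix.one_mul, Matrix.mul_one,
    hWR, hRW]
  module

theorem sq_smul_add_eq_of_trace_eq {a : ℝ} (hR : R.IsHermitian) (hW : W.PosSemidef)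
    (hW' : W'.PosSemidef) (hWR : W * R = 1) (hWR' : W' * (1 - R) = 1)
    (htr : (a ^ 2 • W + W').trace = ((a + 1) ^ 2 • (1 : Matrix n n 𝕜)).trace) :
    a ^ 2 • W + W' = (a + 1) ^ 2 • (1 : Matrix n n 𝕜) := by
  set S := (a + 1) • R - a • (1 : Matrix n n 𝕜)
  have hS : Sᴴ = S := by
    simp only [S, conjTranspose_sub, conjTranspose_smul, conjTranspose_one, hR.eq, star_trivial]
  have hS' : S = (-(a + 1)) • (1 - R) - (-1 : ℝ) • 1 := by module
  -- operator form of `a² / r + 1 / (1 - r) - (a + 1)² = ((a + 1) r - a)² (1 / r + 1 / (1 - r))`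
  have hdecomp : a ^ 2 • W + W' - (a + 1) ^ 2 • 1 = S * W * S + S * W' * S := by
    rw [smul_sub_smul_one_mul_mul_smul_sub_smul_one hWR, hS',
      smul_sub_smul_one_mul_mul_smul_sub_smul_one hWR']
    module
  have hSWS : (S * W * S).PosSemidef := by simpa [hS] using hW.conjTranspose_mul_mul_same S
  have hSW'S : (S * W' * S).PosSemidef := by simpa [hS] using hW'.conjTranspose_mul_mul_same S
  have htr0 : (S * W * S).trace + (S * W' * S).trace = 0 := by
    rw [← trace_add, ← hdecomp, trace_sub, htr, sub_self]
  obtain ⟨h1, h2⟩ := (add_eq_zero_iff_of_nonneg hSWS.trace_nonneg hSW'S.trace_nonneg).mp htr0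
  rw [← sub_eq_zero, hdecomp, hSWS.trace_eq_zero_iff.mp h1, hSW'S.trace_eq_zero_iff.mp h2,
    add_zero]

end PosSemidef

end Matrix

section Pmat

variable {d : ℕ}

theorem Pmat_comm (x y : Fin d ⊕ Fin d) : Pmat d x y = Pmat d y x := by
  rcases x with i | i <;> rcases y with j | j <;> simp [Pmat, eq_comm]

theorem Pmat_inl_inl (i j : Fin d) :
    Pmat d (.inl i) (.inl j) = if i = j then (d : ℝ) ^ 2 / (d * (d + 1) ^ 2) else 0 := by
  simp [Pmat, div_eq_inv_mul]

theorem Pmat_inr_inr (i j : Fin d) :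
    Pmat d (.inr i) (.inr j) = if i = j then 1 / ((d : ℝ) * (d + 1) ^ 2) else 0 := by
  simp [Pmat]

theorem sum_sum_Pmat (hd : 0 < d) : ∑ x, ∑ y, Pmat d x y = 1 := by
  simp only [Pmat, ← Finset.mul_sum, Fintype.sum_sum_type, Finset.sum_ite_eq, Finset.mem_univ,
    if_true, Finset.sum_const, Finset.card_univ, Fintype.card_fin, nsmul_eq_mul]
  field_simp

theorem sum_eq_smul_one_of_trace_mul_eq_Pmat (hd : 0 < d)
    {N B : Fin d ⊕ Fin d → Matrix (Fin d) (Fin d) ℂ} (hN : ∀ x, (N x).PosSemidef)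
    (hB : ∀ y, (B y).PosSemidef) (hBsum : ∑ y, B y = 1)
    (htr : ∀ x y, (N x * B y).trace = (Pmat d x y : ℂ)) :
    ∑ x, N x = (1 / d : ℝ) • (1 : Matrix (Fin d) (Fin d) ℂ) := by
  set c : ℝ := 1 / (d * (d + 1) ^ 2) with hc_def
  have hc : 0 < c := by positivity
  have hc_mul : c * (d * (d + 1) ^ 2) = 1 := by
    rw [hc_def]
    field_simp
  set R := ∑ j, B (.inl j)
  set T := ∑ i, N (.inl i)
  set T' := ∑ i, N (.inr i)
  have hR' : ∑ j, B (.inr j) = 1 - R := by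
    rw [eq_sub_iff_add_eq', ← Fintype.sum_sum_type, hBsum]
  have hTR : T * R = (d ^ 2 * c) • 1 := by
    rw [← Complex.coe_smul]
    refine sum_mul_sum_eq_smul_one_of_trace_mul_eq_ite (fun _ => hB _) (fun _ => hN _)
      (by norm_cast; positivity) fun i j => ?_
    rw [htr, Pmat_inl_inl]
    split_ifs <;> simp [hc_def, div_eq_mul_one_div (_ ^ 2 : ℝ)]
  have hTR' : T' * (1 - R) = c • 1 := by
    rw [← Complex.coe_smul, ← hR']
    refine sum_mul_sum_eq_smul_one_of_trace_mul_eq_ite (fun _ => hB _) (fun _ => hN _)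
      (by norm_cast; positivity) fun i j => ?_
    rw [htr, Pmat_inr_inr]
    split_ifs <;> simp [hc_def]
  have htrace : T.trace + T'.trace = 1 := by
    have htrN : ∀ x, (N x).trace = ∑ y, (Pmat d x y : ℂ) := fun x => by
      rw [← Matrix.mul_one (N x), ← hBsum, Matrix.mul_sum, trace_sum]
      simp_rw [htr]
    rw [← trace_add, ← Fintype.sum_sum_type, trace_sum]
    simp_rw [htrN]
    exact_mod_cast sum_sum_Pmat hd
  have hW := sq_smul_add_eq_of_trace_eq (a := d) (W := (d ^ 2 * c)⁻¹ • T) (W' := c⁻¹ • T')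
    (posSemidef_sum _ fun j _ => hB _).isHermitian
    ((posSemidef_sum _ fun i _ => hN _).smul (by positivity))
    ((posSemidef_sum _ fun i _ => hN _).smul (by positivity))
    (by rw [smul_mul_assoc, hTR, smul_smul, inv_mul_cancel₀ (by positivity), one_smul])
    (by rw [smul_mul_assoc, hTR', smul_smul, inv_mul_cancel₀ hc.ne', one_smul])
    (by
      rw [trace_add, trace_smul, trace_smul, trace_smul, trace_smul, trace_one, Fintype.card_fin,
        eq_sub_of_add_eq' htrace]
      simp only [Complex.real_smul]
      push_cast
      field_simp
      linear_combination (-1 : ℂ) * (by exact_mod_cast hc_mul : (c : ℂ) * (d * (d + 1) ^ 2) = 1))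
  calc ∑ x, N x = T + T' := Fintype.sum_sum_type _
    _ = c • ((d : ℝ) ^ 2 • ((d ^ 2 * c)⁻¹ • T) + c⁻¹ • T') := by
      match_scalars <;> field_simp
    _ = (1 / d : ℝ) • 1 := by
      rw [hW, smul_smul]
      congr 1
      field_simp
      linear_combination hc_mul

theorem partialTrace₁_eq_smul_one_of_trace_mul_kronecker_eq_Pmat (hd : 0 < d)
    {ρ : Matrix (Fin d × Fin d) (Fin d × Fin d) ℂ} (hρ : ρ.PosSemidef)
    {A B : Fin d ⊕ Fin d → Matrix (Fin d) (Fin d) ℂ}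
    (hA : ∀ x, (A x).PosSemidef) (hB : ∀ y, (B y).PosSemidef)
    (hAsum : ∑ x, A x = 1) (hBsum : ∑ y, B y = 1)
    (hcorr : ∀ x y, (ρ * (A x ⊗ₖ B y)).trace = (Pmat d x y : ℂ)) :
    ρ.partialTrace₁ = (1 / d : ℝ) • (1 : Matrix (Fin d) (Fin d) ℂ) := by
  rw [← sum_partialTrace₁_mul_kronecker_one ρ hAsum]
  exact sum_eq_smul_one_of_trace_mul_eq_Pmat hd
    (fun x => hρ.partialTrace₁_mul_kronecker_one (hA x)) hB hBsum
    fun x y => by rw [trace_partialTrace₁_mul_kronecker_one_mul, hcorr]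

end Pmat

theorem stmt5_general (d : ℕ)
    (ρ : Matrix (Fin d × Fin d) (Fin d × Fin d) ℂ)
    (hρ : ρ.PosSemidef)
    (A B : Fin d ⊕ Fin d → Matrix (Fin d) (Fin d) ℂ)
    (hA : ∀ x, (A x).PosSemidef) (hB : ∀ y, (B y).PosSemidef)
    (hAsum : (∑ x, A x) = 1) (hBsum : (∑ y, B y) = 1)
    (hcorr : ∀ x y, (ρ * (A x ⊗ₖ B y)).trace = (Pmat d x y : ℂ)) :
    ∀ i j : Fin d,
      (∑ k : Fin d, ρ (i, k) (j, k) = if i = j then ((1 / d : ℝ) : ℂ) else 0) ∧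
      (∑ k : Fin d, ρ (k, i) (k, j) = if i = j then ((1 / d : ℝ) : ℂ) else 0) := by
  intro i j
  have hcorr_swap : ∀ x y,
      (ρ.submatrix Prod.swap Prod.swap * (B x ⊗ₖ A y)).trace = (Pmat d x y : ℂ) := fun x y => by
    rw [trace_submatrix_swap_mul_kronecker, hcorr, Pmat_comm]
  have hAlice := partialTrace₁_eq_smul_one_of_trace_mul_kronecker_eq_Pmat i.pos
    (hρ.submatrix _) hB hA hBsum hAsum hcorr_swap
  have hBob := partialTrace₁_eq_smul_one_of_trace_mul_kronecker_eq_Pmat i.pos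
    hρ hA hB hAsum hBsum hcorr
  exact ⟨by simpa [one_apply] using congrFun₂ hAlice i j,
    by simpa [one_apply] using congrFun₂ hBob i j⟩

/-- if a `d × d` bipartite quantum state `ρ` together with POVMs
`{A_x}`, `{B_y}` (`2d` outcomes each) generates the correlation `P`, then both reduced
states of `ρ` are maximally mixed. -/
theorem stmt5 (d : ℕ) (hd : 2 ≤ d)
    (ρ : Matrix (Fin d × Fin d) (Fin d × Fin d) ℂ)
    (hρ : ρ.PosSemidef) (hρtr : ρ.trace = 1)
    (A B : Fin d ⊕ Fin d → Matrix (Fin d) (Fin d) ℂ)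
    (hA : ∀ x, (A x).PosSemidef) (hB : ∀ y, (B y).PosSemidef)
    (hAsum : (∑ x, A x) = 1) (hBsum : (∑ y, B y) = 1)
    (hcorr : ∀ x y, (ρ * (A x ⊗ₖ B y)).trace = (Pmat d x y : ℂ)) :
    ∀ i j : Fin d,
      (∑ k : Fin d, ρ (i, k) (j, k) = if i = j then ((1 / d : ℝ) : ℂ) else 0) ∧
      (∑ k : Fin d, ρ (k, i) (k, j) = if i = j then ((1 / d : ℝ) : ℂ) else 0) :=
  stmt5_general d ρ hρ A B hA hB hAsum hBsum hcorr
end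

section
/- Let d ≥ 2. Suppose ρ is a d×d bipartite quantum state and {A_x}_{x=1}^{2d}, {B_y}_{y=1}^{2d} are POVMs with 2d outcomes on each side such that tr(ρ·(A_x ⊗ B_y)) = P_{xy} for all x,y ∈ [2d]. Then for all i,j ∈ [d] with i ≠ j, the matrix products satisfy A_i·A_j = 0, B_i·B_j = 0, A_{d+i}·A_{d+j} = 0, and B_{d+i}·B_{d+j} = 0. -/
open Matrix Kronecker ComplexOrder

/-!
Conditioning `ρ` on Alice's outcome `x` gives a positive semidefinite operator `σ_x` on Bob's side
with `tr (σ_x B_y) = P_xy`. For positive semidefinite `σ, B` one has `tr (σ B) ≤ tr σ · tr B`, so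
`tr B_y ≥ P_yy / ∑_z P_yz`; these lower bounds add up to `d = tr 1 = ∑_y tr B_y`, hence all of them
are equalities. Equality in `tr (σ B) ≤ tr σ · tr B` forces `tr σ • B = tr B • σ`, so `tr (B_i B_j)`
is a multiple of `tr (σ_i B_j) = P_ij = 0`, and a vanishing trace of a product of positive
semidefinite matrices forces the product itself to vanish. Exchanging the parties gives the
statements about `A`.
-/

open scoped MatrixOrder

namespace Matrix.PosSemidef

variable {n 𝕜 : Type*} [Fintype n] [RCLike 𝕜] {X Y : Matrix n n 𝕜}

theorem exists_eq_conjTranspose_mul_self (hX : X.PosSemidef) :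
    ∃ K : Matrix n n 𝕜, X = Kᴴ * K := by
  classical
  exact CStarAlgebra.nonneg_iff_eq_star_mul_self.mp hX.nonneg

theorem trace_mul_nonneg (hX : X.PosSemidef) (hY : Y.PosSemidef) : 0 ≤ (X * Y).trace := by
  obtain ⟨K, rfl⟩ := hY.exists_eq_conjTranspose_mul_self
  rw [← Matrix.mul_assoc, trace_mul_comm, ← Matrix.mul_assoc]
  exact (hX.mul_mul_conjTranspose_same K).trace_nonneg

theorem trace_mul_eq_zero_iff_s7 (hX : X.PosSemidef) (hY : Y.PosSemidef) :
    (X * Y).trace = 0 ↔ X * Y = 0 := by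
  refine ⟨fun h => ?_, fun h => by rw [h, trace_zero]⟩
  obtain ⟨K, rfl⟩ := hY.exists_eq_conjTranspose_mul_self
  obtain ⟨L, rfl⟩ := hX.exists_eq_conjTranspose_mul_self
  rw [← Matrix.mul_assoc, trace_mul_comm, ← Matrix.mul_assoc,
    ((posSemidef_conjTranspose_mul_self L).mul_mul_conjTranspose_same K).trace_eq_zero_iff] at h
  have hLK : L * Kᴴ = 0 := by
    rw [← conjTranspose_mul_self_eq_zero, conjTranspose_mul, conjTranspose_conjTranspose]
    simpa only [Matrix.mul_assoc] using h
  rw [Matrix.mul_assoc, ← Matrix.mul_assoc L, hLK, Matrix.zero_mul, Matrix.mul_zero]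

theorem le_trace_smul_one [DecidableEq n] (hX : X.PosSemidef) : X ≤ X.trace • 1 := by
  have htr : X.trace = ((∑ i, hX.isHermitian.eigenvalues i : ℝ) : 𝕜) := by
    rw [hX.isHermitian.trace_eq_sum_eigenvalues, RCLike.ofReal_sum]
  rw [htr, ← RCLike.real_smul_eq_coe_smul, ← Algebra.algebraMap_eq_smul_one]
  refine le_algebraMap_of_spectrum_le fun x hx => ?_
  obtain ⟨i, rfl⟩ := hX.isHermitian.spectrum_real_eq_range_eigenvalues ▸ hx
  exact Finset.single_le_sum (fun j _ => hX.eigenvalues_nonneg j) (Finset.mem_univ i)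

theorem trace_mul_le [DecidableEq n] (hX : X.PosSemidef) (hY : Y.PosSemidef) :
    (X * Y).trace ≤ X.trace * Y.trace := by
  have h := hX.trace_mul_nonneg (le_iff.mp hY.le_trace_smul_one)
  rwa [Matrix.mul_sub, Matrix.mul_smul, Matrix.mul_one, trace_sub, trace_smul, smul_eq_mul,
    mul_comm, sub_nonneg] at h

theorem mul_eq_trace_smul_of_trace_mul_eq [DecidableEq n] (hX : X.PosSemidef)
    (hY : Y.PosSemidef) (h : (X * Y).trace = X.trace * Y.trace) : X * Y = Y.trace • X := by
  have hzero := hX.trace_mul_eq_zero_iff_s7 (le_iff.mp hY.le_trace_smul_one) |>.mp (by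
    rw [Matrix.mul_sub, Matrix.mul_smul, Matrix.mul_one, trace_sub, trace_smul, smul_eq_mul, h,
      mul_comm, sub_self])
  rw [Matrix.mul_sub, Matrix.mul_smul, Matrix.mul_one, sub_eq_zero] at hzero
  exact hzero.symm

theorem trace_smul_eq_trace_smul_of_trace_mul_eq [DecidableEq n] (hX : X.PosSemidef)
    (hY : Y.PosSemidef) (h : (X * Y).trace = X.trace * Y.trace) :
    X.trace • Y = Y.trace • X := by
  have hXY := hX.mul_eq_trace_smul_of_trace_mul_eq hY h
  have hYX := hY.mul_eq_trace_smul_of_trace_mul_eq hX (by rw [trace_mul_comm, h, mul_comm])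
  have hYtr : star Y.trace = Y.trace := by rw [← trace_conjTranspose, hY.isHermitian.eq]
  calc X.trace • Y = Y * X := hYX.symm
    _ = (X * Y)ᴴ := by rw [conjTranspose_mul, hX.isHermitian.eq, hY.isHermitian.eq]
    _ = Y.trace • X := by rw [hXY, conjTranspose_smul, hYtr, hX.isHermitian.eq]

end Matrix.PosSemidef

namespace Matrix

variable {m n R : Type*} [Fintype m]

def partialTraceLeft [AddCommMonoid R] (M : Matrix (m × n) (m × n) R) : Matrix n n R :=
  ∑ a, M.submatrix (a, ·) (a, ·)

theorem trace_partialTraceLeft_mul [Fintype n] [CommSemiring R] [DecidableEq m]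
    (M : Matrix (m × n) (m × n) R) (Y : Matrix n n R) :
    (M.partialTraceLeft * Y).trace = (M * (1 ⊗ₖ Y)).trace := by
  simp only [partialTraceLeft, trace, diag, mul_apply, sum_apply, submatrix_apply,
    Finset.sum_mul, kroneckerMap_apply, one_apply, Fintype.sum_prod_type, ite_mul, one_mul,
    zero_mul, mul_ite, mul_zero, Finset.sum_ite_irrel, Finset.sum_const_zero,
    Finset.sum_ite_eq', Finset.mem_univ, if_true]
  exact (Finset.sum_congr rfl fun _ _ => Finset.sum_comm).trans Finset.sum_comm

theorem trace_submatrix_swap_mul_kronecker_s7 [Fintype n] [CommSemiring R]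
    (M : Matrix (m × n) (m × n) R) (X : Matrix m m R) (Y : Matrix n n R) :
    (M.submatrix Prod.swap Prod.swap * (Y ⊗ₖ X)).trace = (M * (X ⊗ₖ Y)).trace := by
  simp only [trace, diag, mul_apply, submatrix_apply, kroneckerMap_apply, Fintype.sum_prod_type,
    Prod.swap_prod_mk]
  rw [Finset.sum_comm]
  refine Finset.sum_congr rfl fun a _ => Finset.sum_congr rfl fun b _ => ?_
  rw [Finset.sum_comm]
  simp only [mul_comm (Y _ _)]

variable {𝕜 : Type*} [RCLike 𝕜]

theorem PosSemidef.partialTraceLeft {M : Matrix (m × n) (m × n) 𝕜} (hM : M.PosSemidef) :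
    M.partialTraceLeft.PosSemidef :=
  posSemidef_sum _ fun _ _ => hM.submatrix _

theorem PosSemidef.exists_trace_mul_eq_trace_mul_kronecker [Fintype n]
    {ρ : Matrix (m × n) (m × n) 𝕜} {X : Matrix m m 𝕜} (hρ : ρ.PosSemidef) (hX : X.PosSemidef) :
    ∃ τ : Matrix n n 𝕜, τ.PosSemidef ∧ ∀ Y, (τ * Y).trace = (ρ * (X ⊗ₖ Y)).trace := by
  classical
  obtain ⟨K, rfl⟩ := hX.exists_eq_conjTranspose_mul_self
  refine ⟨((K ⊗ₖ 1) * ρ * (K ⊗ₖ 1)ᴴ).partialTraceLeft,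
    (hρ.mul_mul_conjTranspose_same _).partialTraceLeft, fun Y => ?_⟩
  calc _ = ((K ⊗ₖ 1) * ρ * (Kᴴ ⊗ₖ 1) * (1 ⊗ₖ Y)).trace := by
        rw [trace_partialTraceLeft_mul, conjTranspose_kronecker, conjTranspose_one]
    _ = (ρ * ((Kᴴ ⊗ₖ 1) * (1 ⊗ₖ Y) * (K ⊗ₖ 1))).trace := by
        rw [Matrix.mul_assoc, Matrix.mul_assoc, trace_mul_comm]
        simp only [Matrix.mul_assoc]
    _ = (ρ * ((Kᴴ * K) ⊗ₖ Y)).trace := by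
        rw [← mul_kronecker_mul, ← mul_kronecker_mul, Matrix.mul_one, Matrix.one_mul,
          Matrix.mul_one]

end Matrix

section TraceSaturation

variable {ι n 𝕜 : Type*} [Fintype ι] [Fintype n] [DecidableEq n] [RCLike 𝕜]
  {τ C : ι → Matrix n n 𝕜} {p : ι → ι → ℝ}

theorem trace_eq_sum_of_sum_eq_one (hCsum : ∑ y, C y = 1)
    (hp : ∀ x y, (τ x * C y).trace = p x y) (x : ι) :
    (τ x).trace = ((∑ y, p x y : ℝ) : 𝕜) := by
  rw [← Matrix.mul_one (τ x), ← hCsum, Matrix.mul_sum, trace_sum, RCLike.ofReal_sum]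
  exact Finset.sum_congr rfl fun y _ => hp x y

theorem trace_mul_eq_trace_mul_trace_of_sum_div_eq_card (hτ : ∀ x, (τ x).PosSemidef)
    (hC : ∀ y, (C y).PosSemidef) (hCsum : ∑ y, C y = 1)
    (hp : ∀ x y, (τ x * C y).trace = p x y) (hrow : ∀ x, 0 < ∑ y, p x y)
    (hdiag : ∑ y, p y y / ∑ z, p y z = Fintype.card n) (y : ι) :
    (τ y * C y).trace = (τ y).trace * (C y).trace := by
  have hτtr := trace_eq_sum_of_sum_eq_one hCsum hp
  have hCtr (y : ι) : (C y).trace = (RCLike.re (C y).trace : 𝕜) :=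
    (RCLike.conj_eq_iff_re.mp (RCLike.conj_eq_iff_im.mpr
      (RCLike.nonneg_iff.mp (hC y).trace_nonneg).2)).symm
  have hlow (y : ι) : p y y / ∑ z, p y z ≤ RCLike.re (C y).trace := by
    have h := (hτ y).trace_mul_le (hC y)
    rw [hp, hτtr, hCtr, ← RCLike.ofReal_mul, RCLike.ofReal_le_ofReal] at h
    rwa [div_le_iff₀' (hrow y)]
  have hsum : ∑ y, RCLike.re (C y).trace = Fintype.card n := by
    rw [← map_sum, ← trace_sum, hCsum, trace_one]
    simp
  have heq := (Finset.sum_eq_sum_iff_of_le fun y _ => hlow y).mp (hdiag.trans hsum.symm) y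
    (Finset.mem_univ y)
  rw [div_eq_iff (hrow y).ne'] at heq
  rw [hp, hτtr, hCtr, heq, RCLike.ofReal_mul, mul_comm]

theorem mul_eq_zero_of_sum_div_eq_card (hτ : ∀ x, (τ x).PosSemidef)
    (hC : ∀ y, (C y).PosSemidef) (hCsum : ∑ y, C y = 1)
    (hp : ∀ x y, (τ x * C y).trace = p x y) (hrow : ∀ x, 0 < ∑ y, p x y)
    (hdiag : ∑ y, p y y / ∑ z, p y z = Fintype.card n) :
    ∀ ⦃i j⦄, p i j = 0 → C i * C j = 0 := by
  intro i j hij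
  have hsmul := (hτ i).trace_smul_eq_trace_smul_of_trace_mul_eq (hC i)
    (trace_mul_eq_trace_mul_trace_of_sum_div_eq_card hτ hC hCsum hp hrow hdiag i)
  have htrace : (τ i).trace * (C i * C j).trace = 0 := by
    rw [← smul_eq_mul, ← trace_smul, ← Matrix.smul_mul, hsmul, Matrix.smul_mul, trace_smul, hp,
      hij]
    simp
  rw [← (hC i).trace_mul_eq_zero_iff_s7 (hC j)]
  refine (mul_eq_zero.mp htrace).resolve_left ?_
  rw [trace_eq_sum_of_sum_eq_one hCsum hp]
  exact RCLike.ofReal_ne_zero.mpr (hrow i).ne'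

end TraceSaturation

namespace Pmat

variable {d : ℕ}

theorem comm (x y : Fin d ⊕ Fin d) : Pmat d x y = Pmat d y x := by
  rcases x with i | i <;> rcases y with j | j <;> simp [Pmat, eq_comm]

theorem inl_inl_of_ne {i j : Fin d} (hij : i ≠ j) : Pmat d (.inl i) (.inl j) = 0 := by
  simp [Pmat, hij]

theorem inr_inr_of_ne {i j : Fin d} (hij : i ≠ j) : Pmat d (.inr i) (.inr j) = 0 := by
  simp [Pmat, hij]

theorem sum_inl (i : Fin d) : ∑ y, Pmat d (.inl i) y = 1 / (d + 1) := by
  have hd : (d : ℝ) ≠ 0 := Nat.cast_ne_zero.mpr i.pos.ne'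
  simp only [Pmat, Fintype.sum_sum_type, mul_ite, mul_zero, mul_one, Finset.sum_ite_eq,
    Finset.mem_univ, ↓reduceIte, Finset.sum_const, Finset.card_univ, Fintype.card_fin,
    nsmul_eq_mul]
  field_simp

theorem sum_inr (i : Fin d) : ∑ y, Pmat d (.inr i) y = 1 / (d * (d + 1)) := by
  have hd : (d : ℝ) ≠ 0 := Nat.cast_ne_zero.mpr i.pos.ne'
  simp only [Pmat, Fintype.sum_sum_type, mul_ite, mul_zero, mul_one, Finset.sum_ite_eq,
    Finset.mem_univ, ↓reduceIte, Finset.sum_const, Finset.card_univ, Fintype.card_fin,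
    nsmul_eq_mul]
  field_simp

theorem sum_pos (x : Fin d ⊕ Fin d) : 0 < ∑ y, Pmat d x y := by
  rcases x with i | i
  · rw [sum_inl]
    positivity
  · have hd : (0 : ℝ) < d := Nat.cast_pos.mpr i.pos
    rw [sum_inr]
    positivity

theorem sum_diag_div_sum : ∑ y, Pmat d y y / ∑ z, Pmat d y z = Fintype.card (Fin d) := by
  rcases Nat.eq_zero_or_pos d with rfl | hd
  · simp
  have hd' : (d : ℝ) ≠ 0 := by positivity
  rw [Fintype.sum_sum_type]
  simp only [sum_inl, sum_inr]
  simp only [Pmat, ↓reduceIte, Finset.sum_const, Finset.card_univ, Fintype.card_fin, nsmul_eq_mul]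
  field_simp

end Pmat

theorem stmt7_general (d : ℕ)
    (ρ : Matrix (Fin d × Fin d) (Fin d × Fin d) ℂ)
    (hρ : ρ.PosSemidef)
    (A B : Fin d ⊕ Fin d → Matrix (Fin d) (Fin d) ℂ)
    (hA : ∀ x, (A x).PosSemidef) (hB : ∀ y, (B y).PosSemidef)
    (hAsum : (∑ x, A x) = 1) (hBsum : (∑ y, B y) = 1)
    (hcorr : ∀ x y, (ρ * (A x ⊗ₖ B y)).trace = (Pmat d x y : ℂ)) :
    ∀ i j : Fin d, i ≠ j →
      A (Sum.inl i) * A (Sum.inl j) = 0 ∧ B (Sum.inl i) * B (Sum.inl j) = 0 ∧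
      A (Sum.inr i) * A (Sum.inr j) = 0 ∧ B (Sum.inr i) * B (Sum.inr j) = 0 := by
  choose σ hσ hσB using fun x => hρ.exists_trace_mul_eq_trace_mul_kronecker (hA x)
  choose τ hτ hτA using fun y =>
    (hρ.submatrix Prod.swap).exists_trace_mul_eq_trace_mul_kronecker (hB y)
  have hPB (x y) : (σ x * B y).trace = Pmat d x y := (hσB x (B y)).trans (hcorr x y)
  have hPA (y x) : (τ y * A x).trace = Pmat d y x := by
    rw [hτA, trace_submatrix_swap_mul_kronecker_s7, hcorr, Pmat.comm]
  have hB0 := mul_eq_zero_of_sum_div_eq_card hσ hB hBsum hPB Pmat.sum_pos Pmat.sum_diag_div_sum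
  have hA0 := mul_eq_zero_of_sum_div_eq_card hτ hA hAsum hPA Pmat.sum_pos Pmat.sum_diag_div_sum
  intro i j hij
  exact ⟨hA0 (Pmat.inl_inl_of_ne hij), hB0 (Pmat.inl_inl_of_ne hij),
    hA0 (Pmat.inr_inr_of_ne hij), hB0 (Pmat.inr_inr_of_ne hij)⟩

/-- if a `d × d` bipartite quantum state `ρ` together with POVMs
`{A_x}`, `{B_y}` (`2d` outcomes each) generates the correlation `P`, then for `i ≠ j` in `[d]`
the products `A_i A_j`, `B_i B_j`, `A_{d+i} A_{d+j}`, `B_{d+i} B_{d+j}` all vanish. -/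
theorem stmt7 (d : ℕ) (hd : 2 ≤ d)
    (ρ : Matrix (Fin d × Fin d) (Fin d × Fin d) ℂ)
    (hρ : ρ.PosSemidef) (hρtr : ρ.trace = 1)
    (A B : Fin d ⊕ Fin d → Matrix (Fin d) (Fin d) ℂ)
    (hA : ∀ x, (A x).PosSemidef) (hB : ∀ y, (B y).PosSemidef)
    (hAsum : (∑ x, A x) = 1) (hBsum : (∑ y, B y) = 1)
    (hcorr : ∀ x y, (ρ * (A x ⊗ₖ B y)).trace = (Pmat d x y : ℂ)) :
    ∀ i j : Fin d, i ≠ j →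
      A (Sum.inl i) * A (Sum.inl j) = 0 ∧ B (Sum.inl i) * B (Sum.inl j) = 0 ∧
      A (Sum.inr i) * A (Sum.inr j) = 0 ∧ B (Sum.inr i) * B (Sum.inr j) = 0 :=
  stmt7_general d ρ hρ A B hA hB hAsum hBsum hcorr
end

section
/- Let d ≥ 2 and let ρ be a complex positive semidefinite matrix indexed by Fin d × Fin d with trace 1 such that the range of ρ is contained in span{|0⟩⊗|0⟩, |1⟩⊗|1⟩, …, |d−1⟩⊗|d−1⟩} and ⟨ii|ρ|ii⟩ = 1/d for every i ∈ {0,…,d−1}. Let B be a rank-1 d×d complex positive semidefinite matrix such that for every i ∈ {0,…,d−1}, tr(ρ·((d/(d+1))|i⟩⟨i| ⊗ B)) = 1/(d(d+1)²). Then every entry of B has absolute value 1/(d(d+1)); that is, |⟨i|B|j⟩| = 1/(d(d+1)) for all i,j ∈ {0,…,d−1}. -/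
open Matrix Kronecker ComplexOrder

/-!
The range condition forces `ρ` to vanish on every row, and hence (being Hermitian) every column,
indexed by a pair `(a, b)` with `a ≠ b`. The trace condition then only sees `ρ(ii,ii) · B i i`,
which pins the diagonal of `B` to `1/(d(d+1))`. Since `B` has rank one its `2 × 2` minors vanish,
so `|B i j|² = B i j · B j i = B i i · B j j`.
-/

namespace Matrix

theorem apply_eq_zero_of_range_le_span_single {R m n ι : Type*} [CommSemiring R] [Fintype n]
    [DecidableEq m] [DecidableEq n] {A : Matrix m n R} {f : ι → m}
    (hA : LinearMap.range A.mulVecLin ≤ Submodule.span R (Set.range fun i => Pi.single (f i) 1))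
    {y : m} (hy : ∀ i, f i ≠ y) (x : n) : A y x = 0 := by
  have hspan : Submodule.span R (Set.range fun i => (Pi.single (f i) 1 : m → R)) ≤
      LinearMap.ker (LinearMap.proj (R := R) (φ := fun _ : m => R) y) := by
    rw [Submodule.span_le]
    rintro _ ⟨i, rfl⟩
    simp [Pi.single_eq_of_ne' (hy i)]
  simpa [mulVec_single] using hspan (hA ⟨Pi.single x 1, rfl⟩)

theorem apply_mul_apply_eq_of_rank_le_one {K m n : Type*} [Field K] [Fintype n]
    {A : Matrix m n K} (hA : A.rank ≤ 1) (i i' : m) (j j' : n) :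
    A i j * A i' j' = A i j' * A i' j := by
  classical
  obtain ⟨v, hv⟩ := finrank_le_one_iff.mp hA
  have hcol : ∀ j, ∃ c : K, ∀ i, A i j = c * (v : m → K) i := by
    intro j
    obtain ⟨c, hc⟩ := hv ⟨_, Pi.single j 1, rfl⟩
    refine ⟨c, fun i => ?_⟩
    simpa [mulVec_single] using congrFun (congrArg Subtype.val hc) i |>.symm
  obtain ⟨c, hc⟩ := hcol j
  obtain ⟨c', hc'⟩ := hcol j'
  rw [hc, hc, hc', hc']
  ring

theorem IsHermitian.norm_apply_sq_of_rank_le_one {𝕜 n : Type*} [RCLike 𝕜] [Fintype n]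
    {A : Matrix n n 𝕜} (hA : A.IsHermitian) (hrank : A.rank ≤ 1) (i j : n) :
    ‖A i j‖ ^ 2 = ‖A i i‖ * ‖A j j‖ := by
  rw [← norm_mul, ← apply_mul_apply_eq_of_rank_le_one hrank i j j i, norm_mul, ← hA.apply j i,
    norm_star, sq]

theorem trace_mul_single_kronecker {R ι κ : Type*} [CommSemiring R] [Fintype ι] [Fintype κ]
    [DecidableEq ι] (ρ : Matrix (ι × κ) (ι × κ) R) (i : ι) (B : Matrix κ κ R) :
    (ρ * (single i i 1 ⊗ₖ B)).trace = ∑ k, ∑ l, ρ (i, k) (i, l) * B l k := by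
  simp [trace, mul_apply, Fintype.sum_prod_type, kroneckerMap_apply, single_apply, ite_and]

theorem trace_mul_single_kronecker_of_diagonal_support {R ι : Type*} [CommSemiring R] [Fintype ι]
    [DecidableEq ι] {ρ : Matrix (ι × ι) (ι × ι) R}
    (hrow : ∀ a b x, a ≠ b → ρ (a, b) x = 0) (hcol : ∀ a b x, a ≠ b → ρ x (a, b) = 0)
    (i : ι) (B : Matrix ι ι R) :
    (ρ * (single i i 1 ⊗ₖ B)).trace = ρ (i, i) (i, i) * B i i := by
  rw [trace_mul_single_kronecker, Finset.sum_eq_single i, Finset.sum_eq_single i]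
  · exact fun l _ hl => by rw [hcol i l _ (Ne.symm hl), zero_mul]
  · simp
  · exact fun k _ hk => Finset.sum_eq_zero fun l _ => by rw [hrow i k _ (Ne.symm hk), zero_mul]
  · simp

end Matrix

theorem stmt8_general (d : ℕ)
    (ρ : Matrix (Fin d × Fin d) (Fin d × Fin d) ℂ)
    (hρ : ρ.PosSemidef)
    (hrange : LinearMap.range ρ.mulVecLin ≤
      Submodule.span ℂ (Set.range fun i : Fin d => (Pi.single (i, i) 1 : Fin d × Fin d → ℂ)))
    (hdiag : ∀ i : Fin d, ρ (i, i) (i, i) = ((1 / d : ℝ) : ℂ))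
    (B : Matrix (Fin d) (Fin d) ℂ) (hB : B.PosSemidef) (hBrank : B.rank = 1)
    (hBtr : ∀ i : Fin d,
      (ρ * ((((d : ℝ) / (d + 1) : ℝ) • Matrix.single i i (1 : ℂ)) ⊗ₖ B)).trace =
        ((1 / (d * (d + 1) ^ 2) : ℝ) : ℂ)) :
    ∀ i j : Fin d, ‖B i j‖ = 1 / (d * (d + 1)) := by
  intro i j
  have hd : (d : ℂ) ≠ 0 := Nat.cast_ne_zero.mpr (Fin.pos i).ne'
  have hρrow : ∀ a b x, a ≠ b → ρ (a, b) x = 0 := fun a b x hab =>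
    apply_eq_zero_of_range_le_span_single hrange
      (fun k hk => hab ((congrArg Prod.fst hk).symm.trans (congrArg Prod.snd hk))) x
  have hρcol : ∀ a b x, a ≠ b → ρ x (a, b) = 0 := fun a b x hab => by
    rw [← hρ.isHermitian.apply, hρrow a b x hab, star_zero]
  have hBdiag : ∀ k, ‖B k k‖ = 1 / (d * (d + 1)) := by
    intro k
    have hk := hBtr k
    rw [smul_kronecker, Matrix.mul_smul, trace_smul,
      trace_mul_single_kronecker_of_diagonal_support hρrow hρcol, hdiag] at hk
    have hBkk : B k k = ((1 / (d * (d + 1)) : ℝ) : ℂ) := by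
      rw [Complex.real_smul] at hk
      push_cast at hk ⊢
      field_simp at hk ⊢
      linear_combination hk
    rw [hBkk, Complex.norm_real, Real.norm_of_nonneg (by positivity)]
  have hsq := hB.isHermitian.norm_apply_sq_of_rank_le_one hBrank.le i j
  rw [hBdiag, hBdiag, ← sq] at hsq
  exact (pow_left_inj₀ (norm_nonneg _) (by positivity) two_ne_zero).mp hsq

/-- if `ρ` is a PSD matrix on `ℂ^d ⊗ ℂ^d` of trace 1 whose range lies in
`span{|ii⟩ : i}`, with `⟨ii|ρ|ii⟩ = 1/d` for all `i`, and `B` is a rank-1 `d × d` PSD matrix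
with `tr(ρ·((d/(d+1))|i⟩⟨i| ⊗ B)) = 1/(d(d+1)²)` for all `i`, then every entry of `B` has
absolute value `1/(d(d+1))`. -/
theorem stmt8 (d : ℕ) (hd : 2 ≤ d)
    (ρ : Matrix (Fin d × Fin d) (Fin d × Fin d) ℂ)
    (hρ : ρ.PosSemidef) (hρtr : ρ.trace = 1)
    (hrange : LinearMap.range ρ.mulVecLin ≤
      Submodule.span ℂ (Set.range fun i : Fin d => (Pi.single (i, i) 1 : Fin d × Fin d → ℂ)))
    (hdiag : ∀ i : Fin d, ρ (i, i) (i, i) = ((1 / d : ℝ) : ℂ))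
    (B : Matrix (Fin d) (Fin d) ℂ) (hB : B.PosSemidef) (hBrank : B.rank = 1)
    (hBtr : ∀ i : Fin d,
      (ρ * ((((d : ℝ) / (d + 1) : ℝ) • Matrix.single i i (1 : ℂ)) ⊗ₖ B)).trace =
        ((1 / (d * (d + 1) ^ 2) : ℝ) : ℂ)) :
    ∀ i j : Fin d, ‖B i j‖ = 1 / (d * (d + 1)) :=
  stmt8_general d ρ hρ hrange hdiag B hB hBrank hBtr
end

section
/- Let d ≥ 2 and let ρ be a complex positive semidefinite matrix indexed by Fin d × Fin d with trace 1 such that the range of ρ is contained in span{|0⟩⊗|0⟩, …, |d−1⟩⊗|d−1⟩} and ⟨ii|ρ|ii⟩ = 1/d for every i ∈ {0,…,d−1}. Let A and B be rank-1 d×d complex positive semidefinite matrices all of whose entries have absolute value 1/(d(d+1)), and suppose tr(ρ·(A ⊗ B)) = 1/(d(d+1)²). Then ρ has rank 1, i.e. ρ is a pure state. -/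
/-! Write `A = u u*`, `B = v v*`. Since the range of `ρ` lies in `span {|ii⟩}` and `ρ` is
Hermitian, `ρ` only sees the part `W` of `u ⊗ v` on the diagonal pairs `(i, i)`, so
`tr (ρ (A ⊗ B)) = ⟨W, ρ W⟩`, while the entry condition gives
`‖W‖² = d · (1 / (d (d + 1)))² = 1 / (d (d + 1)²)`. Hence `⟨W, ρ W⟩ = tr ρ · ‖W‖²`, the equality
case of `⟨W, ρ W⟩ ≤ tr ρ · ‖W‖²`. For `P = ‖W‖² - W W*` the positive semidefinite matrix `P ρ P`
then has trace `‖W‖² (tr ρ · ‖W‖² - ⟨W, ρ W⟩) = 0`, so `ρ P = 0`, i.e. `ρ = ρ W W* / ‖W‖²` has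
rank at most one. -/

open Matrix Kronecker ComplexOrder

namespace Matrix

theorem rank_pos_of_ne_zero {K m n : Type*} [Field K] [Fintype n] {A : Matrix m n K}
    (hA : A ≠ 0) : 0 < A.rank := by
  classical
  refine Nat.pos_of_ne_zero fun h => hA ?_
  have : A.mulVecLin = 0 := LinearMap.range_eq_bot.mp (Submodule.finrank_eq_zero.mp h)
  rw [← toLin'_apply'] at this
  exact toLin'.map_eq_zero_iff.mp this

theorem trace_mul_vecMulVec {R n : Type*} [CommSemiring R] [Fintype n] (M : Matrix n n R)
    (x y : n → R) : (M * vecMulVec x y).trace = y ⬝ᵥ M *ᵥ x := by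
  rw [mul_vecMulVec, trace_vecMulVec, dotProduct_comm]

theorem vecMulVec_kronecker_vecMulVec {R l m p q : Type*} [CommSemigroup R] (a : l → R)
    (b : m → R) (c : p → R) (e : q → R) :
    vecMulVec a b ⊗ₖ vecMulVec c e =
      vecMulVec (fun i => a i.1 * c i.2) (fun j => b j.1 * e j.2) := by
  ext ⟨i, i'⟩ ⟨j, j'⟩
  simp only [kroneckerMap_apply, vecMulVec_apply]
  exact mul_mul_mul_comm _ _ _ _

theorem apply_eq_zero_of_range_mulVecLin_le_span_single {R m n ι : Type*} [CommSemiring R]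
    [Fintype n] [DecidableEq m] {M : Matrix m n R} {f : ι → m}
    (h : LinearMap.range M.mulVecLin ≤ Submodule.span R (Set.range fun i => Pi.single (f i) 1))
    {p : m} (hp : p ∉ Set.range f) (q : n) : M p q = 0 := by
  classical
  have hspan : Submodule.span R (Set.range fun i => (Pi.single (f i) 1 : m → R)) ≤
      LinearMap.ker (LinearMap.proj p) := by
    rw [Submodule.span_le]
    rintro _ ⟨i, rfl⟩
    exact Pi.single_eq_of_ne (fun h => hp ⟨i, h.symm⟩) 1
  simpa [mulVec_single] using hspan (h (LinearMap.mem_range_self M.mulVecLin (Pi.single q 1)))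

theorem IsHermitian.dotProduct_mulVec_indicator {R n : Type*} [CommRing R] [StarRing R]
    [Fintype n] {M : Matrix n n R} (hM : M.IsHermitian) {S : Set n}
    (h : ∀ p ∉ S, ∀ q, M p q = 0) (x : n → R) :
    star (S.indicator x) ⬝ᵥ M *ᵥ S.indicator x = star x ⬝ᵥ M *ᵥ x := by
  have h' : ∀ p, ∀ q ∉ S, M p q = 0 := fun p q hq => by rw [← hM.apply, h q hq, star_zero]
  simp only [dotProduct, mulVec, Finset.mul_sum]
  refine Finset.sum_congr rfl fun p _ => Finset.sum_congr rfl fun q _ => ?_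
  by_cases hp : p ∈ S
  · by_cases hq : q ∈ S
    · simp [hp, hq]
    · simp [h' p q hq]
  · simp [h p hp q]

variable {𝕜 n : Type*} [RCLike 𝕜] [Fintype n]

theorem star_indicator_dotProduct_indicator_range_diag {ι : Type*} [Fintype ι] (u v : ι → 𝕜) :
    star ((Set.range fun i : ι => (i, i)).indicator fun p => u p.1 * v p.2) ⬝ᵥ
      (Set.range fun i : ι => (i, i)).indicator (fun p => u p.1 * v p.2) =
      ∑ i, ((‖u i‖ ^ 2 * ‖v i‖ ^ 2 : ℝ) : 𝕜) := by
  classical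
  simp only [dotProduct, Pi.star_apply, Set.indicator_apply, Set.mem_range, Prod.mk.injEq,
    exists_eq_left, mul_ite, mul_zero, Fintype.sum_prod_type, Finset.sum_ite_eq,
    Finset.mem_univ, if_true]
  refine Finset.sum_congr rfl fun i _ => ?_
  rw [star_mul', mul_mul_mul_comm, RCLike.star_def, RCLike.conj_mul, RCLike.conj_mul]
  push_cast
  rfl

theorem PosSemidef.exists_eq_vecMulVec_of_rank_eq_one {A : Matrix n n 𝕜} (hA : A.PosSemidef)
    (h : A.rank = 1) : ∃ u : n → 𝕜, A = vecMulVec u (star u) := by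
  classical
  obtain ⟨⟨k, _⟩, hunique⟩ := Fintype.card_eq_one_iff.mp (hA.1.rank_eq_card_non_zero_eigs ▸ h)
  have hzero : ∀ i ≠ k, hA.1.eigenvalues i = 0 := fun i hi => by
    by_contra h'
    exact hi (congrArg Subtype.val (hunique ⟨i, h'⟩))
  set e : n → 𝕜 := Pi.single k (√(hA.1.eigenvalues k) : 𝕜)
  have hD : diagonal (RCLike.ofReal ∘ hA.1.eigenvalues) = vecMulVec e (star e) := by
    ext i j
    rw [diagonal_apply, vecMulVec_apply, Pi.star_apply]
    by_cases hij : i = j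
    · subst hij
      by_cases hik : i = k
      · subst hik
        simp [e, ← RCLike.ofReal_mul, Real.mul_self_sqrt (hA.eigenvalues_nonneg i)]
      · simp [e, hik, hzero i hik]
    · by_cases hik : i = k
      · subst hik
        simp [e, hij, Ne.symm hij]
      · simp [e, hij, hik]
  refine ⟨hA.1.eigenvectorUnitary *ᵥ e, ?_⟩
  conv_lhs => rw [hA.1.spectral_theorem, Unitary.conjStarAlgAut_apply, hD]
  rw [mul_vecMulVec, vecMulVec_mul, star_mulVec, star_eq_conjTranspose]

theorem PosSemidef.mul_eq_zero_of_conjTranspose_mul_mul_eq_zero {m : Type*} [Fintype m]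
    {c : Matrix n n 𝕜} (hc : c.PosSemidef) {B : Matrix n m 𝕜} (h : Bᴴ * c * B = 0) :
    c * B = 0 := by
  classical
  refine ext_of_mulVec_single fun j => ?_
  rw [zero_mulVec, ← mulVec_mulVec, ← hc.dotProduct_mulVec_zero_iff, star_mulVec,
    ← dotProduct_mulVec, mulVec_mulVec, mulVec_mulVec, h, zero_mulVec, dotProduct_zero]

theorem PosSemidef.rank_le_one_of_dotProduct_mulVec_eq {c : Matrix n n 𝕜} (hc : c.PosSemidef)
    {w : n → 𝕜} (hw : w ≠ 0) (h : star w ⬝ᵥ c *ᵥ w = c.trace * (star w ⬝ᵥ w)) :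
    c.rank ≤ 1 := by
  classical
  set t := star w ⬝ᵥ w
  have ht : t ≠ 0 := dotProduct_star_self_eq_zero.not.mpr hw
  set P : Matrix n n 𝕜 := t • 1 - vecMulVec w (star w)
  have hPH : Pᴴ = P := by
    have hts : star t = t := by rw [← star_dotProduct_star, star_star]
    simp [P, conjTranspose_vecMulVec, hts]
  have hPP : P * P = t • P := by
    simp only [P, sub_mul, mul_sub, Matrix.smul_mul, Matrix.mul_smul, one_mul, mul_one, smul_smul,
      vecMulVec_mul_vecMulVec, vecMulVec_smul]
    module
  have hcP : c * P = 0 := by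
    refine hc.mul_eq_zero_of_conjTranspose_mul_mul_eq_zero ?_
    rw [← (hc.conjTranspose_mul_mul_same P).trace_eq_zero_iff, hPH, trace_mul_cycle, hPP]
    simp only [P, smul_mul, sub_mul, one_mul, trace_smul, trace_sub, trace_mul_comm _ c,
      trace_mul_vecMulVec, h]
    simp [t, mul_comm]
  have htc : t • c = vecMulVec (c *ᵥ w) (star w) := by
    simp only [P, mul_sub, Matrix.mul_smul, mul_one] at hcP
    rw [sub_eq_zero.mp hcP, mul_vecMulVec]
  have hc : c = vecMulVec (t⁻¹ • c *ᵥ w) (star w) := by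
    rw [smul_vecMulVec, ← htc, smul_smul, inv_mul_cancel₀ ht, one_smul]
  rw [hc]
  exact rank_vecMulVec_le _ _

end Matrix

theorem stmt9_general (d : ℕ) (hd : 2 ≤ d)
    (ρ : Matrix (Fin d × Fin d) (Fin d × Fin d) ℂ)
    (hρ : ρ.PosSemidef) (hρtr : ρ.trace = 1)
    (hrange : LinearMap.range ρ.mulVecLin ≤
      Submodule.span ℂ (Set.range fun i : Fin d => (Pi.single (i, i) 1 : Fin d × Fin d → ℂ)))
    (A B : Matrix (Fin d) (Fin d) ℂ)
    (hA : A.PosSemidef) (hArank : A.rank = 1)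
    (hB : B.PosSemidef) (hBrank : B.rank = 1)
    (hAent : ∀ i j : Fin d, ‖A i j‖ = 1 / (d * (d + 1)))
    (hBent : ∀ i j : Fin d, ‖B i j‖ = 1 / (d * (d + 1)))
    (htr : (ρ * (A ⊗ₖ B)).trace = ((1 / (d * (d + 1) ^ 2) : ℝ) : ℂ)) :
    ρ.rank = 1 := by
  obtain ⟨u, rfl⟩ := hA.exists_eq_vecMulVec_of_rank_eq_one hArank
  obtain ⟨v, rfl⟩ := hB.exists_eq_vecMulVec_of_rank_eq_one hBrank
  set W := (Set.range fun i : Fin d => (i, i)).indicator fun p => u p.1 * v p.2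
  have hquad : star W ⬝ᵥ ρ *ᵥ W = ((1 / (d * (d + 1) ^ 2) : ℝ) : ℂ) := by
    rw [hρ.1.dotProduct_mulVec_indicator
      (fun p hp q => apply_eq_zero_of_range_mulVecLin_le_span_single hrange hp q), ← htr,
      vecMulVec_kronecker_vecMulVec, trace_mul_vecMulVec]
    congr 1
    funext p
    exact star_mul' _ _
  have hd0 : d ≠ 0 := by omega
  have hnorm : star W ⬝ᵥ W = ((1 / (d * (d + 1) ^ 2) : ℝ) : ℂ) := by
    have hu : ∀ i, ‖u i‖ ^ 2 = 1 / (d * (d + 1)) := fun i => by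
      simpa [sq, vecMulVec_apply] using hAent i i
    have hv : ∀ i, ‖v i‖ ^ 2 = 1 / (d * (d + 1)) := fun i => by
      simpa [sq, vecMulVec_apply] using hBent i i
    rw [star_indicator_dotProduct_indicator_range_diag]
    simp only [hu, hv, Finset.sum_const, Finset.card_univ, Fintype.card_fin, nsmul_eq_mul]
    push_cast
    field_simp
  have hW : W ≠ 0 := fun hW => by
    norm_num [hW, hd0] at hnorm
    norm_cast at hnorm
  refine le_antisymm (hρ.rank_le_one_of_dotProduct_mulVec_eq hW ?_) (rank_pos_of_ne_zero ?_)
  · rw [hquad, hnorm, hρtr, one_mul]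
  · rintro rfl
    simp at hρtr

/-- if `ρ` is a PSD matrix on `ℂ^d ⊗ ℂ^d` of trace 1 whose range lies in
`span{|ii⟩ : i}`, with `⟨ii|ρ|ii⟩ = 1/d` for all `i`, and `A`, `B` are rank-1 `d × d` PSD
matrices all of whose entries have absolute value `1/(d(d+1))` such that
`tr(ρ·(A ⊗ B)) = 1/(d(d+1)²)`, then `ρ` has rank 1, i.e. `ρ` is a pure state. -/
theorem stmt9 (d : ℕ) (hd : 2 ≤ d)
    (ρ : Matrix (Fin d × Fin d) (Fin d × Fin d) ℂ)
    (hρ : ρ.PosSemidef) (hρtr : ρ.trace = 1)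
    (hrange : LinearMap.range ρ.mulVecLin ≤
      Submodule.span ℂ (Set.range fun i : Fin d => (Pi.single (i, i) 1 : Fin d × Fin d → ℂ)))
    (hdiag : ∀ i : Fin d, ρ (i, i) (i, i) = ((1 / d : ℝ) : ℂ))
    (A B : Matrix (Fin d) (Fin d) ℂ)
    (hA : A.PosSemidef) (hArank : A.rank = 1)
    (hB : B.PosSemidef) (hBrank : B.rank = 1)
    (hAent : ∀ i j : Fin d, ‖A i j‖ = 1 / (d * (d + 1)))
    (hBent : ∀ i j : Fin d, ‖B i j‖ = 1 / (d * (d + 1)))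
    (htr : (ρ * (A ⊗ₖ B)).trace = ((1 / (d * (d + 1) ^ 2) : ℝ) : ℂ)) :
    ρ.rank = 1 :=
  stmt9_general d hd ρ hρ hρtr hrange A B hA hArank hB hBrank hAent hBent htr
end

section
/- Let d ≥ 2 and let C_1,…,C_d and D_1,…,D_d be d×d complex positive semidefinite matrices such that tr(C_x D_y) = (d/(d+1)²)·δ_{xy} for all x,y ∈ [d], and such that every diagonal entry of every C_x and every D_y equals 1/(√d(d+1)). Then C_x = D_x for every x ∈ [d], and ∑_{x=1}^d C_x = (√d/(d+1))·I_d. -/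
/-! Each `2 × 2` principal minor of a positive semidefinite `A` is nonnegative, so
`|A i j|² ≤ A i i * A j j`; summing gives `tr(A²) ≤ (tr A)²`. The prescribed diagonals give
`tr C_x = tr D_x = √d/(d+1) =: r`, hence `tr((C_x - D_x)²) = tr C_x² + tr D_x² - 2 tr(C_x D_x)
≤ 2r² - 2r² = 0` and `C_x = D_x`. Then `S = ∑ C_x` has `tr S = d r` and `tr S² = d r²`, so
`tr((S - r I)²) = 0`, i.e. `S = r I`. -/

open Matrix ComplexOrder

namespace Matrix

variable {n 𝕜 : Type*} [RCLike 𝕜]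

lemma PosSemidef.apply_mul_apply_le {A : Matrix n n 𝕜} (hA : A.PosSemidef) (i j : n) :
    A i j * A j i ≤ A i i * A j j := by
  have h := (hA.submatrix ![i, j]).det_nonneg
  rw [det_fin_two] at h
  simpa [sub_nonneg] using h

lemma PosSemidef.trace_mul_self_le_sq_trace [Fintype n] {A : Matrix n n 𝕜} (hA : A.PosSemidef) :
    (A * A).trace ≤ A.trace ^ 2 := by
  rw [sq, trace, trace, Finset.sum_mul_sum]
  refine Finset.sum_le_sum fun i _ => ?_
  rw [diag_apply, mul_apply]
  exact Finset.sum_le_sum fun j _ => hA.apply_mul_apply_le i j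

lemma PosSemidef.eq_of_trace_mul_eq_sq_trace [Fintype n] {A B : Matrix n n 𝕜} (hA : A.PosSemidef)
    (hB : B.PosSemidef) (htr : A.trace = B.trace) (hAB : (A * B).trace = A.trace ^ 2) :
    A = B := by
  have hexpand :
      ((A - B)ᴴ * (A - B)).trace = (A * A).trace + (B * B).trace - 2 * (A * B).trace := by
    rw [conjTranspose_sub, hA.1.eq, hB.1.eq, sub_mul, mul_sub, mul_sub, trace_sub, trace_sub,
      trace_sub, trace_mul_comm B A]
    ring
  have hle : ((A - B)ᴴ * (A - B)).trace ≤ 0 := by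
    rw [hexpand, hAB]
    calc (A * A).trace + (B * B).trace - 2 * A.trace ^ 2
        ≤ A.trace ^ 2 + B.trace ^ 2 - 2 * A.trace ^ 2 := by
          gcongr
          exacts [hA.trace_mul_self_le_sq_trace, hB.trace_mul_self_le_sq_trace]
      _ = 0 := by rw [htr]; ring
  have h0 := le_antisymm hle (posSemidef_conjTranspose_mul_self (A - B)).trace_nonneg
  exact sub_eq_zero.mp (trace_conjTranspose_mul_self_eq_zero_iff.mp h0)

lemma IsHermitian.eq_smul_one_of_trace_mul_self [Fintype n] [DecidableEq n] {S : Matrix n n 𝕜}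
    (hS : S.IsHermitian) (r : ℝ) (htr : S.trace = Fintype.card n * r)
    (hSS : (S * S).trace = Fintype.card n * r ^ 2) : S = r • 1 := by
  have hherm : (S - r • 1)ᴴ = S - r • 1 := by
    simp [conjTranspose_sub, hS.eq]
  have h0 : ((S - r • 1)ᴴ * (S - r • 1)).trace = 0 := by
    simp only [hherm, sub_mul, mul_sub, trace_sub, Matrix.smul_mul, Matrix.mul_smul, one_mul,
      mul_one, smul_smul, trace_smul, trace_one, htr, hSS, RCLike.real_smul_eq_coe_mul]
    push_cast
    ring
  exact sub_eq_zero.mp (trace_conjTranspose_mul_self_eq_zero_iff.mp h0)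

end Matrix

theorem stmt10_general (d : ℕ)
    (C D : Fin d → Matrix (Fin d) (Fin d) ℂ)
    (hC : ∀ x, (C x).PosSemidef) (hD : ∀ y, (D y).PosSemidef)
    (hfac : ∀ x y, (C x * D y).trace =
      if x = y then (((d : ℝ) / (d + 1 : ℝ) ^ 2 : ℝ) : ℂ) else 0)
    (hCdiag : ∀ x i, C x i i = ((1 / (Real.sqrt d * (d + 1)) : ℝ) : ℂ))
    (hDdiag : ∀ y i, D y i i = ((1 / (Real.sqrt d * (d + 1)) : ℝ) : ℂ)) :
    (∀ x, C x = D x) ∧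
    (∑ x, C x) = (Real.sqrt d / (d + 1) : ℝ) • (1 : Matrix (Fin d) (Fin d) ℂ) := by
  set r : ℝ := Real.sqrt d / (d + 1)
  have hr_sq : (d : ℝ) / (d + 1 : ℝ) ^ 2 = r ^ 2 := by
    rw [div_pow, Real.sq_sqrt d.cast_nonneg]
  have htrace_of_diag {A : Matrix (Fin d) (Fin d) ℂ}
      (hA : ∀ i, A i i = ((1 / (Real.sqrt d * (d + 1)) : ℝ) : ℂ)) : A.trace = r := by
    simp only [trace, diag_apply, hA, Finset.sum_const, Finset.card_univ, Fintype.card_fin,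
      nsmul_eq_mul]
    rw [← Complex.ofReal_natCast, ← Complex.ofReal_mul, mul_one_div, div_mul_eq_div_div,
      Real.div_sqrt]
  have hCD (x : Fin d) : C x = D x := by
    refine (hC x).eq_of_trace_mul_eq_sq_trace (hD x) ?_ ?_
    · rw [htrace_of_diag (hCdiag x), htrace_of_diag (hDdiag x)]
    · rw [hfac, if_pos rfl, htrace_of_diag (hCdiag x), hr_sq, Complex.ofReal_pow]
  have hS : (∑ x, C x).IsHermitian := isSelfAdjoint_sum _ fun x _ => (hC x).1
  refine ⟨hCD, hS.eq_smul_one_of_trace_mul_self r ?_ ?_⟩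
  · simp [trace_sum, htrace_of_diag (hCdiag _)]
  · have hCC (x y : Fin d) : (C x * C y).trace = if x = y then ((r ^ 2 : ℝ) : ℂ) else 0 := by
      rw [hCD y, hfac, hr_sq]
    simp [Finset.sum_mul_sum, trace_sum, hCC]

/-- if `d × d` PSD matrices `C_1, …, C_d` and `D_1, …, D_d` satisfy
`tr(C_x D_y) = (d/(d+1)²)·δ_{xy}` and every diagonal entry of every `C_x` and `D_y` equals
`1/(√d(d+1))`, then `C_x = D_x` for every `x` and `∑_x C_x = (√d/(d+1))·I_d`. -/
theorem stmt10 (d : ℕ) (hd : 2 ≤ d)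
    (C D : Fin d → Matrix (Fin d) (Fin d) ℂ)
    (hC : ∀ x, (C x).PosSemidef) (hD : ∀ y, (D y).PosSemidef)
    (hfac : ∀ x y, (C x * D y).trace =
      if x = y then (((d : ℝ) / (d + 1 : ℝ) ^ 2 : ℝ) : ℂ) else 0)
    (hCdiag : ∀ x i, C x i i = ((1 / (Real.sqrt d * (d + 1)) : ℝ) : ℂ))
    (hDdiag : ∀ y i, D y i i = ((1 / (Real.sqrt d * (d + 1)) : ℝ) : ℂ)) :
    (∀ x, C x = D x) ∧
    (∑ x, C x) = (Real.sqrt d / (d + 1) : ℝ) • (1 : Matrix (Fin d) (Fin d) ℂ) :=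
  stmt10_general d C D hC hD hfac hCdiag hDdiag
end

section
/- Let d ≥ 2, let 0 < a < 1, and let z ∈ ℝ^d have all entries positive. Suppose ρ is a d×d bipartite quantum state and {A_x}_{x=1}^{3d}, {B_y}_{y=1}^{3d} are POVMs with 3d outcomes on each side such that tr(ρ·(A_x ⊗ B_y)) = Q_{xy} for all x,y ∈ [3d]. Then the matrices A_P = ∑_{x=1}^{2d} A_x and B_P = ∑_{y=1}^{2d} B_y both have rank d, i.e. they are invertible. -/
open Matrix Kronecker ComplexOrder

/-- The correlation `Q`, as a `3d × 3d` matrix indexed by `(Fin d ⊕ Fin d) ⊕ Fin d`: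
top-left `2d × 2d` block `a·P`, top-right block `e·zᵀ` stacked on `diag(z)`, bottom-left
block `z·eᵀ` next to `diag(z)`, and bottom-right block `(d(d+1)²/a)·diag(z)²`. -/
noncomputable def Qmat (d : ℕ) (a : ℝ) (z : Fin d → ℝ) :
    Matrix ((Fin d ⊕ Fin d) ⊕ Fin d) ((Fin d ⊕ Fin d) ⊕ Fin d) ℝ :=
  fun x y =>
    match x, y with
    | Sum.inl p, Sum.inl q => a * Pmat d p q
    | Sum.inl (Sum.inl _), Sum.inr j => z j
    | Sum.inl (Sum.inr i), Sum.inr j => if i = j then z i else 0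
    | Sum.inr i, Sum.inl (Sum.inl _) => z i
    | Sum.inr i, Sum.inl (Sum.inr j) => if i = j then z i else 0
    | Sum.inr i, Sum.inr j => (d * (d + 1) ^ 2 / a) * (if i = j then (z i) ^ 2 else 0)

/-! The top-left `d × d` block of `Q` is `(a d / (d+1)²) · I`. Writing `Aᵢ, Bᵢ` for the first `d`
outcomes, and using that `tr(ρ M) = 0 ↔ M ρ = 0` for positive semidefinite `ρ, M`, this says
`(Aₖ ⊗ Bᵢ) ρ = 0` exactly when `k ≠ i`. A column of `(1 ⊗ Bᵢ) ρ` not killed by `Aᵢ ⊗ 1` is a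
vector `uᵢ` with `Aᵢ uᵢ ≠ 0` and `Aₖ uᵢ = 0` for `k ≠ i`. A vector `v` in the kernel of
`A_P = ∑ₓ Aₓ` lies in the kernel of every `Aᵢ`, so `v, u₁, …, u_d` are linearly independent
in `ℂᵈ` unless `v = 0`. The `B` side is the same argument with the tensor factors swapped. -/

namespace Matrix

section RCLike

variable {𝕜 : Type*} [RCLike 𝕜] {n : Type*} [Fintype n]

open scoped MatrixOrder in
theorem PosSemidef.trace_mul_eq_zero_iff_s15 {ρ M : Matrix n n 𝕜} (hρ : ρ.PosSemidef)
    (hM : M.PosSemidef) : (ρ * M).trace = 0 ↔ M * ρ = 0 := by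
  classical
  refine ⟨fun h => ?_, fun h => by rw [trace_mul_comm, h, trace_zero]⟩
  obtain ⟨B, rfl⟩ := CStarAlgebra.nonneg_iff_eq_star_mul_self.mp hρ.nonneg
  obtain ⟨C, rfl⟩ := CStarAlgebra.nonneg_iff_eq_star_mul_self.mp hM.nonneg
  simp only [star_eq_conjTranspose] at h ⊢
  have hBC : B * Cᴴ = 0 := by
    rw [← trace_conjTranspose_mul_self_eq_zero_iff, ← h, conjTranspose_mul,
      conjTranspose_conjTranspose, ← trace_mul_cycle]
    simp only [mul_assoc]
  rw [show Cᴴ * C * (Bᴴ * B) = Cᴴ * (B * Cᴴ)ᴴ * B by simp [mul_assoc], hBC]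
  simp

theorem isUnit_sum_of_posSemidef {κ : Type*} [DecidableEq n] {A : κ → Matrix n n 𝕜}
    (hA : ∀ p, (A p).PosSemidef) (s : Finset κ)
    (h : ∀ v : n → 𝕜, (∀ p ∈ s, A p *ᵥ v = 0) → v = 0) : IsUnit (∑ p ∈ s, A p) := by
  rw [← mulVec_injective_iff_isUnit]
  intro v w hvw
  rw [← sub_eq_zero]
  apply h
  have hsum : ∑ p ∈ s, star (v - w) ⬝ᵥ A p *ᵥ (v - w) = 0 := by
    rw [← dotProduct_sum, ← sum_mulVec, mulVec_sub, hvw, sub_self, dotProduct_zero]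
  intro p hp
  rw [← (hA p).dotProduct_mulVec_zero_iff]
  exact (Finset.sum_eq_zero_iff_of_nonneg fun q _ => (hA q).dotProduct_mulVec_nonneg _).mp
    hsum p hp

end RCLike

theorem trace_submatrix_mul_submatrix {n n' R : Type*} [Fintype n] [Fintype n']
    [CommSemiring R] (M N : Matrix n n R) (e : n' ≃ n) :
    (M.submatrix e e * N.submatrix e e).trace = (M * N).trace := by
  rw [submatrix_mul_equiv]
  exact e.sum_comp fun i => (M * N) i i

variable {K : Type*} [Field K]

theorem kronecker_one_mul_apply {m m' n p : Type*} [Fintype m'] [Fintype n] [DecidableEq n]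
    (X : Matrix m m' K) (W : Matrix (m' × n) p K) (a : m) (b : n) (q : p) :
    ((X ⊗ₖ (1 : Matrix n n K)) * W) (a, b) q = (X *ᵥ fun a' => W (a', b) q) a := by
  simp [mul_apply, mulVec, dotProduct, Fintype.sum_prod_type, one_apply, mul_ite, ite_mul]

theorem exists_mulVec_ne_zero_of_kronecker_mul_ne_zero {m m' n n' p : Type*} [Fintype m']
    [Fintype n] [Fintype n'] [DecidableEq m'] [DecidableEq n] (X : Matrix m m' K)
    (Y : Matrix n n' K) (R : Matrix (m' × n') p K) (h : (X ⊗ₖ Y) * R ≠ 0) :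
    ∃ u : m' → K, X *ᵥ u ≠ 0 ∧ ∀ X' : Matrix m m' K, (X' ⊗ₖ Y) * R = 0 → X' *ᵥ u = 0 := by
  set W := ((1 : Matrix m' m' K) ⊗ₖ Y) * R with hW_def
  have hW (X' : Matrix m m' K) : (X' ⊗ₖ Y) * R = (X' ⊗ₖ (1 : Matrix n n K)) * W := by
    rw [hW_def, ← Matrix.mul_assoc, ← mul_kronecker_mul, Matrix.mul_one, Matrix.one_mul]
  obtain ⟨⟨a, b⟩, q, hne⟩ : ∃ i j, ((X ⊗ₖ (1 : Matrix n n K)) * W) i j ≠ 0 := by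
    by_contra! h0
    exact h (by rw [hW]; exact Matrix.ext h0)
  refine ⟨fun a' => W (a', b) q, fun hu => hne ?_, fun X' hX' => funext fun a'' => ?_⟩
  · rw [kronecker_one_mul_apply, hu, Pi.zero_apply]
  · rw [← kronecker_one_mul_apply, ← hW, hX', zero_apply, Pi.zero_apply]

theorem eq_zero_of_forall_mulVec_eq_zero {m n ι : Type*} [Fintype n] [Fintype ι]
    (X : ι → Matrix m n K) (u : ι → n → K) (hu : ∀ i k, k ≠ i → X k *ᵥ u i = 0)
    (hu_ne : ∀ i, X i *ᵥ u i ≠ 0) (hcard : Fintype.card n ≤ Fintype.card ι) {v : n → K}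
    (hv : ∀ i, X i *ᵥ v = 0) : v = 0 := by
  by_contra hv0
  suffices LinearIndependent K (fun o : Option ι => o.elim v u) by
    have := this.fintype_card_le_finrank
    rw [Module.finrank_fintype_fun_eq_card, Fintype.card_option] at this
    omega
  rw [Fintype.linearIndependent_iff]
  intro g hg
  rw [Fintype.sum_option] at hg
  have hsome (k : ι) : g (some k) = 0 := by
    have := congrArg (X k *ᵥ ·) hg
    simp only [Option.elim, mulVec_add, mulVec_smul, mulVec_sum, hv, smul_zero, zero_add,
      mulVec_zero] at this
    rw [Finset.sum_eq_single k (fun i _ hik => by rw [hu i k (Ne.symm hik), smul_zero])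
      (by simp)] at this
    exact (smul_eq_zero.mp this).resolve_right (hu_ne k)
  rintro (_ | k)
  · simp only [Option.elim, hsome, zero_smul, Finset.sum_const_zero, add_zero] at hg
    exact (smul_eq_zero.mp hg).resolve_right hv0
  · exact hsome k

end Matrix

section

variable {𝕜 : Type*} [RCLike 𝕜] {m n ι : Type*} [Fintype m] [Fintype n]

def IsDiagonalCorrelation (ρ : Matrix (m × n) (m × n) 𝕜) (X : ι → Matrix m m 𝕜)
    (Y : ι → Matrix n n 𝕜) : Prop :=
  ∀ k i, (ρ * (X k ⊗ₖ Y i)).trace = 0 ↔ k ≠ i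

namespace IsDiagonalCorrelation

variable {ρ : Matrix (m × n) (m × n) 𝕜} {X : ι → Matrix m m 𝕜} {Y : ι → Matrix n n 𝕜}

theorem swap (h : IsDiagonalCorrelation ρ X Y) :
    IsDiagonalCorrelation (ρ.submatrix Prod.swap Prod.swap) Y X := by
  intro k i
  have hcomm : Y k ⊗ₖ X i = (X i ⊗ₖ Y k).submatrix Prod.swap Prod.swap := by
    ext ⟨a, b⟩ ⟨c, e⟩
    simp [mul_comm]
  have htrace := trace_submatrix_mul_submatrix ρ (X i ⊗ₖ Y k) (Equiv.prodComm n m)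
  rw [Equiv.coe_prodComm] at htrace
  rw [hcomm, htrace, h, ne_comm]

theorem eq_zero_of_forall_mulVec_eq_zero [Fintype ι] [DecidableEq m] [DecidableEq n]
    (h : IsDiagonalCorrelation ρ X Y) (hρ : ρ.PosSemidef) (hX : ∀ i, (X i).PosSemidef)
    (hY : ∀ i, (Y i).PosSemidef) (hcard : Fintype.card m ≤ Fintype.card ι) {v : m → 𝕜}
    (hv : ∀ i, X i *ᵥ v = 0) : v = 0 := by
  have hvanish (k i : ι) : (X k ⊗ₖ Y i) * ρ = 0 ↔ k ≠ i := by
    rw [← hρ.trace_mul_eq_zero_iff_s15 ((hX k).kronecker (hY i)), h]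
  have hu (i : ι) : ∃ u : m → 𝕜, X i *ᵥ u ≠ 0 ∧ ∀ k, k ≠ i → X k *ᵥ u = 0 := by
    obtain ⟨u, hu_ne, hu⟩ := exists_mulVec_ne_zero_of_kronecker_mul_ne_zero (X i) (Y i) ρ
      fun h0 => (hvanish i i).mp h0 rfl
    exact ⟨u, hu_ne, fun k hk => hu (X k) ((hvanish k i).mpr hk)⟩
  choose u hu_ne hu using hu
  exact Matrix.eq_zero_of_forall_mulVec_eq_zero X u hu hu_ne hcard hv

end IsDiagonalCorrelation

end

theorem Qmat_inl_inl_eq_zero_iff {d : ℕ} {a : ℝ} (ha : a ≠ 0) (z : Fin d → ℝ) (k i : Fin d) :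
    Qmat d a z (.inl (.inl k)) (.inl (.inl i)) = 0 ↔ k ≠ i := by
  have hd : (d : ℝ) ≠ 0 := Nat.cast_ne_zero.mpr k.pos.ne'
  have hd1 : (d : ℝ) + 1 ≠ 0 := by positivity
  by_cases hki : k = i <;> simp [Qmat, Pmat, hki, ha, hd, hd1]

theorem stmt15_general (d : ℕ) (a : ℝ) (ha : 0 < a)
    (z : Fin d → ℝ)
    (ρ : Matrix (Fin d × Fin d) (Fin d × Fin d) ℂ)
    (hρ : ρ.PosSemidef)
    (A B : (Fin d ⊕ Fin d) ⊕ Fin d → Matrix (Fin d) (Fin d) ℂ)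
    (hA : ∀ x, (A x).PosSemidef) (hB : ∀ y, (B y).PosSemidef)
    (hcorr : ∀ x y, (ρ * (A x ⊗ₖ B y)).trace = (Qmat d a z x y : ℂ)) :
    ((∑ p : Fin d ⊕ Fin d, A (Sum.inl p)).rank = d ∧
      IsUnit (∑ p : Fin d ⊕ Fin d, A (Sum.inl p))) ∧
    ((∑ p : Fin d ⊕ Fin d, B (Sum.inl p)).rank = d ∧
      IsUnit (∑ p : Fin d ⊕ Fin d, B (Sum.inl p))) := by
  have hdiag :
      IsDiagonalCorrelation ρ (fun i => A (.inl (.inl i))) (fun i => B (.inl (.inl i))) :=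
    fun k i => by rw [hcorr, Complex.ofReal_eq_zero, Qmat_inl_inl_eq_zero_iff ha.ne']
  have hA_unit : IsUnit (∑ p, A (.inl p)) :=
    isUnit_sum_of_posSemidef (fun p => hA _) _ fun v hv =>
      hdiag.eq_zero_of_forall_mulVec_eq_zero hρ (fun _ => hA _) (fun _ => hB _) le_rfl
        fun i => hv (.inl i) (Finset.mem_univ _)
  have hB_unit : IsUnit (∑ p, B (.inl p)) :=
    isUnit_sum_of_posSemidef (fun p => hB _) _ fun v hv =>
      hdiag.swap.eq_zero_of_forall_mulVec_eq_zero (hρ.submatrix _) (fun _ => hB _)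
        (fun _ => hA _) le_rfl fun i => hv (.inl i) (Finset.mem_univ _)
  have rank_of_isUnit {M : Matrix (Fin d) (Fin d) ℂ} (hM : IsUnit M) : M.rank = d := by
    rw [M.rank_of_isUnit hM, Fintype.card_fin]
  exact ⟨⟨rank_of_isUnit hA_unit, hA_unit⟩, rank_of_isUnit hB_unit, hB_unit⟩

/-- if a `d × d` bipartite quantum state `ρ` together with POVMs
`{A_x}`, `{B_y}` (`3d` outcomes each) generates the correlation `Q`, then the partial sums
`A_P = ∑_{x=1}^{2d} A_x` and `B_P = ∑_{y=1}^{2d} B_y` have rank `d`, i.e. are invertible. -/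
theorem stmt15 (d : ℕ) (hd : 2 ≤ d) (a : ℝ) (ha : 0 < a) (ha1 : a < 1)
    (z : Fin d → ℝ) (hz : ∀ i, 0 < z i)
    (ρ : Matrix (Fin d × Fin d) (Fin d × Fin d) ℂ)
    (hρ : ρ.PosSemidef) (hρtr : ρ.trace = 1)
    (A B : (Fin d ⊕ Fin d) ⊕ Fin d → Matrix (Fin d) (Fin d) ℂ)
    (hA : ∀ x, (A x).PosSemidef) (hB : ∀ y, (B y).PosSemidef)
    (hAsum : (∑ x, A x) = 1) (hBsum : (∑ y, B y) = 1)
    (hcorr : ∀ x y, (ρ * (A x ⊗ₖ B y)).trace = (Qmat d a z x y : ℂ)) :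
    ((∑ p : Fin d ⊕ Fin d, A (Sum.inl p)).rank = d ∧
      IsUnit (∑ p : Fin d ⊕ Fin d, A (Sum.inl p))) ∧
    ((∑ p : Fin d ⊕ Fin d, B (Sum.inl p)).rank = d ∧
      IsUnit (∑ p : Fin d ⊕ Fin d, B (Sum.inl p))) :=
  stmt15_general d a ha z ρ hρ A B hA hB hcorr
end
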